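/- arXiv:2604.14765 — 6 statements merged into one kernel-verified Lean document; each statement's English description precedes it below -/
import Mathlib

section
/- Let (𝒮, d_𝒮) and (𝒜, d_𝒜) be Polish metric spaces, 𝒯 a Markov transition kernel that is (L_𝒮, L_𝒜)-Lipschitz in the 2-Wasserstein sense, and π a K_π-Lipschitz policy. Then for all s, s' ∈ 𝒮, the induced kernels satisfy the pointwise bound W₂(P^π(s,·), P^π(s',·)) ≤ (L_𝒮 + L_𝒜 K_π) · d_𝒮(s, s'). -/
/-!
Glue near-optimal couplings: take a coupling `η` of `π s` and `π s'` of cost close to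
`(K_π d(s, s'))²` and, for every pair of actions `(a, a')`, a coupling `Φ (a, a')` of `T s a` and
`T s' a'` of cost close to `(L_𝒮 d(s, s') + L_𝒜 d(a, a'))²`. Then `η.bind Φ` couples the two induced
kernels, and Minkowski's inequality in `L²(η)` bounds its cost by
`(L_𝒮 d(s, s') + L_𝒜 K_π d(s, s'))²` up to an arbitrarily small error.

The whole difficulty is to choose `Φ` measurably in `(a, a')`. Quantize `𝒮` along a countable
`ε`-net: the cell masses of `T s a` depend measurably on `a`, and a discrete coupling of two
probability vectors on `ℕ` is lifted back to `𝒮 × 𝒮` by spreading each entry over the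
corresponding pair of cells, at a cost of `O(ε)` in `W₂`. A near-optimal discrete coupling can be
chosen measurably among countably many candidates: finitely supported rational sub-plans,
completed to couplings by the normalised product of the residual marginals. Finite second moments
make the cost of that completion small once the sub-plan captures most of an optimal plan.
-/

open MeasureTheory ENNReal NNReal

/-- The squared 2-Wasserstein distance between two measures, defined as the infimum,
over all couplings `γ` of `(μ, ν)`, of the integral of the squared distance. -/
noncomputable def W2sq {X : Type*} [MeasurableSpace X] [PseudoEMetricSpace X]
    (μ ν : Measure X) : ℝ≥0∞ :=
  ⨅ γ ∈ {γ : Measure (X × X) | γ.fst = μ ∧ γ.snd = ν}, ∫⁻ p, edist p.1 p.2 ^ 2 ∂γ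

/-- The 2-Wasserstein distance. -/
noncomputable def W2 {X : Type*} [MeasurableSpace X] [PseudoEMetricSpace X]
    (μ ν : Measure X) : ℝ≥0∞ :=
  W2sq μ ν ^ (1 / 2 : ℝ)

/-- A measure has a finite second moment. -/
def HasFiniteSecondMoment {X : Type*} [MeasurableSpace X] [PseudoEMetricSpace X]
    (μ : Measure X) : Prop :=
  ∃ x₀ : X, ∫⁻ x, edist x x₀ ^ 2 ∂μ < ⊤

open ProbabilityTheory

namespace ENNReal

lemma rpow_one_half_le_iff {x r : ℝ≥0∞} : x ^ (1 / 2 : ℝ) ≤ r ↔ x ≤ r ^ 2 := by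
  rw [one_div, rpow_inv_le_iff (by norm_num), rpow_two]

lemma rpow_one_half_lt_iff {x r : ℝ≥0∞} : x ^ (1 / 2 : ℝ) < r ↔ x < r ^ 2 := by
  rw [one_div, rpow_inv_lt_iff (by norm_num), rpow_two]

lemma sq_add_sq_le_add_sq (a b : ℝ≥0∞) : a ^ 2 + b ^ 2 ≤ (a + b) ^ 2 := by
  rw [add_sq]
  gcongr
  exact le_self_add

lemma add_sq_le_two_mul (a b : ℝ≥0∞) : (a + b) ^ 2 ≤ 2 * (a ^ 2 + b ^ 2) := by
  have := rpow_add_le_mul_rpow_add_rpow a b one_le_two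
  norm_num [rpow_two] at this
  exact this

lemma exists_rat_le_sub_mul_le {g b η : ℝ≥0∞} (hg : g ≠ ⊤) (hgb : g * b ≠ ⊤) (hη : η ≠ 0) :
    ∃ q : ℚ, ENNReal.ofReal q ≤ g ∧ (g - ENNReal.ofReal q) * b ≤ η := by
  rcases eq_or_ne g 0 with rfl | hg0
  · exact ⟨0, by simp⟩
  have hb : b ≠ ⊤ := fun hb => hgb (by rw [hb, mul_top hg0])
  have hηb : η * b⁻¹ ≠ 0 := mul_ne_zero hη (ENNReal.inv_ne_zero.2 hb)
  obtain ⟨q, -, hlt, hqg⟩ := lt_iff_exists_rat_btwn.1 (ENNReal.sub_lt_self hg hg0 hηb)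
  refine ⟨q, hqg.le, ?_⟩
  calc (g - ENNReal.ofReal q) * b ≤ η * b⁻¹ * b := by
        gcongr
        rw [tsub_le_iff_right, add_comm, ← tsub_le_iff_right]
        exact hlt.le
    _ ≤ η := by rw [mul_assoc]; exact mul_le_of_le_one_right' (ENNReal.inv_mul_le_one b)

lemma le_of_forall_ne_zero_le_add_mul {a b C : ℝ≥0∞} (hC : C ≠ ⊤)
    (h : ∀ θ : ℝ≥0∞, θ ≠ 0 → a ≤ b + C * θ) : a ≤ b := by
  refine le_of_forall_pos_le_add fun ε hε _ => ?_
  have hC1 : C + 1 ≠ ⊤ := add_ne_top.2 ⟨hC, one_ne_top⟩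
  refine (h (ε / (C + 1)) (ENNReal.div_ne_zero.2 ⟨by simpa using hε.ne', hC1⟩)).trans ?_
  gcongr
  calc C * (ε / (C + 1)) ≤ (C + 1) * (ε / (C + 1)) := by gcongr; exact le_self_add
    _ ≤ ε := mul_div_le

end ENNReal

section Couplings

variable {α β γ δ : Type*} [MeasurableSpace α] [MeasurableSpace β] [MeasurableSpace γ]
  [MeasurableSpace δ]

lemma lintegral_sq_le_of_le_add_const {μ : Measure α} [IsZeroOrProbabilityMeasure μ]
    {f g : α → ℝ≥0∞} (hf : AEMeasurable f μ) {r k : ℝ≥0∞} (hfr : ∫⁻ a, f a ^ 2 ∂μ ≤ r ^ 2)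
    (hgf : ∀ a, g a ≤ f a + k) : ∫⁻ a, g a ^ 2 ∂μ ≤ (r + k) ^ 2 := by
  have hk : ∫⁻ _, k ^ (2 : ℝ) ∂μ ≤ k ^ (2 : ℝ) := by
    rw [lintegral_const]
    exact mul_le_of_le_one_right' prob_le_one
  have hmink := ENNReal.lintegral_Lp_add_le hf (aemeasurable_const (b := k)) one_le_two
  simp only [Pi.add_apply, ENNReal.rpow_two] at hmink hk
  calc ∫⁻ a, g a ^ 2 ∂μ ≤ ∫⁻ a, (f a + k) ^ 2 ∂μ := lintegral_mono fun a => by gcongr; exact hgf a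
    _ ≤ (r + k) ^ 2 := by
      rw [← ENNReal.rpow_one_half_le_iff]
      exact hmink.trans (add_le_add (ENNReal.rpow_one_half_le_iff.2 hfr)
        (ENNReal.rpow_one_half_le_iff.2 hk))

lemma isProbabilityMeasure_of_fst_eq {ρ : Measure (α × β)} {μ : Measure α}
    [IsProbabilityMeasure μ] (h : ρ.fst = μ) : IsProbabilityMeasure ρ :=
  ⟨by rw [← Measure.fst_univ, h, measure_univ]⟩

lemma measurable_cond {μ : α → Measure β} (hμ : Measurable μ) {s : Set β}
    (hs : MeasurableSet s) : Measurable fun a => (μ a)[|s] := by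
  refine Measure.measurable_of_measurable_coe _ fun B hB => ?_
  simp_rw [cond_apply hs]
  exact ((Measure.measurable_coe hs).comp hμ).inv.mul
    ((Measure.measurable_coe (hs.inter hB)).comp hμ)

lemma measurable_prod_cond {μ : α → Measure β} {ν : α → Measure γ} (hμ : Measurable μ)
    (hν : Measurable ν) {s : Set β} {t : Set γ} (hs : MeasurableSet s) (ht : MeasurableSet t) :
    Measurable fun a => ((μ a)[|s]).prod ((ν a)[|t]) := by
  let κ : Kernel α β := ⟨fun a => (μ a)[|s], measurable_cond hμ hs⟩
  let κ' : Kernel α γ := ⟨fun a => (ν a)[|t], measurable_cond hν ht⟩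
  have : IsFiniteKernel κ := ⟨⟨1, one_lt_top, fun a => (prob_le_one : (μ a)[|s] .univ ≤ 1)⟩⟩
  have : IsFiniteKernel κ' := ⟨⟨1, one_lt_top, fun a => (prob_le_one : (ν a)[|t] .univ ≤ 1)⟩⟩
  convert (κ ×ₖ κ').measurable using 1
  exact funext fun a => (Kernel.prod_apply κ κ' a).symm

namespace MeasureTheory.Measure

variable {η : Measure (α × β)} {Φ : α × β → Measure (γ × δ)}

lemma fst_bind_of_fst_eq (hΦ : Measurable Φ) {κ : α → Measure γ} (hκ : Measurable κ)
    (h : ∀ p, (Φ p).fst = κ p.1) : (η.bind Φ).fst = η.fst.bind κ := by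
  ext B hB
  rw [fst_apply hB, bind_apply (measurable_fst hB) hΦ.aemeasurable, bind_apply hB hκ.aemeasurable,
    Measure.fst, lintegral_map (f := fun a => κ a B) ((measurable_coe hB).comp hκ) measurable_fst]
  exact lintegral_congr fun p => by rw [← fst_apply hB, h]

lemma snd_bind_of_snd_eq (hΦ : Measurable Φ) {κ : β → Measure δ} (hκ : Measurable κ)
    (h : ∀ p, (Φ p).snd = κ p.2) : (η.bind Φ).snd = η.snd.bind κ := by
  ext B hB
  rw [snd_apply hB, bind_apply (measurable_snd hB) hΦ.aemeasurable, bind_apply hB hκ.aemeasurable,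
    Measure.snd, lintegral_map (f := fun a => κ a B) ((measurable_coe hB).comp hκ) measurable_snd]
  exact lintegral_congr fun p => by rw [← snd_apply hB, h]

end MeasureTheory.Measure

end Couplings

section Wasserstein

variable {X : Type*} [MeasurableSpace X] [PseudoEMetricSpace X] {μ ν : Measure X}

lemma W2_le_of_coupling {γ : Measure (X × X)} (h₁ : γ.fst = μ) (h₂ : γ.snd = ν) {r : ℝ≥0∞}
    (hγ : ∫⁻ p, edist p.1 p.2 ^ 2 ∂γ ≤ r ^ 2) : W2 μ ν ≤ r :=
  ENNReal.rpow_one_half_le_iff.2 ((iInf₂_le γ ⟨h₁, h₂⟩).trans hγ)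

lemma exists_coupling_lintegral_le_sq_W2_add [IsProbabilityMeasure μ] [IsProbabilityMeasure ν]
    {ε : ℝ≥0∞} (hε : ε ≠ 0) : ∃ γ : Measure (X × X), γ.fst = μ ∧ γ.snd = ν ∧
      ∫⁻ p, edist p.1 p.2 ^ 2 ∂γ ≤ (W2 μ ν + ε) ^ 2 := by
  rcases eq_or_ne (W2 μ ν) ⊤ with htop | htop
  · exact ⟨μ.prod ν, Measure.fst_prod, Measure.snd_prod, by simp [htop]⟩
  have hlt : W2sq μ ν < (W2 μ ν + ε) ^ 2 :=
    ENNReal.rpow_one_half_lt_iff.1 (ENNReal.lt_add_right htop hε)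
  obtain ⟨γ, hγ⟩ := iInf_lt_iff.1 hlt
  obtain ⟨⟨h₁, h₂⟩, hγ⟩ := iInf_lt_iff.1 hγ
  exact ⟨γ, h₁, h₂, hγ.le⟩

lemma lintegral_edist_sq_bind_le {A : Type*} [PseudoEMetricSpace A] [MeasurableSpace A]
    [SecondCountableTopology A] [OpensMeasurableSpace A] [SecondCountableTopology X]
    [OpensMeasurableSpace X] {η : Measure (A × A)} [IsProbabilityMeasure η]
    {Φ : A × A → Measure (X × X)} (hΦ : Measurable Φ) {L r k : ℝ≥0∞}
    (hη : ∫⁻ p, edist p.1 p.2 ^ 2 ∂η ≤ r ^ 2)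
    (hΦη : ∀ p, ∫⁻ z, edist z.1 z.2 ^ 2 ∂(Φ p) ≤ (L * edist p.1 p.2 + k) ^ 2) :
    ∫⁻ z, edist z.1 z.2 ^ 2 ∂(η.bind Φ) ≤ (L * r + k) ^ 2 := by
  rw [Measure.lintegral_bind hΦ.aemeasurable (measurable_edist.pow_const 2).aemeasurable]
  refine (lintegral_mono hΦη).trans
    (lintegral_sq_le_of_le_add_const (by fun_prop) ?_ fun _ => le_rfl)
  simp_rw [mul_pow]
  rw [lintegral_const_mul _ (measurable_edist.pow_const 2)]
  gcongr

end Wasserstein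

section DiscreteCoupling

def IsDiscreteCoupling (c d : ℕ → ℝ≥0∞) (G : ℕ × ℕ → ℝ≥0∞) : Prop :=
  (∀ i, ∑' j, G (i, j) = c i) ∧ ∀ j, ∑' i, G (i, j) = d j

def IsDiscreteSubPlan (c d : ℕ → ℝ≥0∞) (P : ℕ × ℕ → ℝ≥0∞) : Prop :=
  (∀ i, ∑' j, P (i, j) ≤ c i) ∧ ∀ j, ∑' i, P (i, j) ≤ d j

noncomputable def discreteCost (D G : ℕ × ℕ → ℝ≥0∞) : ℝ≥0∞ := ∑' w, G w * D w

/-- If a sub-plan `P` of two probability vectors already has mass `1`, the factor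
`(1 - ∑ P)⁻¹ = ⊤` multiplies vanishing residuals, and `⊤ * 0 = 0` leaves `P` unchanged. -/
noncomputable def completePlan (c d : ℕ → ℝ≥0∞) (P : ℕ × ℕ → ℝ≥0∞) (w : ℕ × ℕ) : ℝ≥0∞ :=
  P w + (1 - ∑' v, P v)⁻¹ * ((c w.1 - ∑' j, P (w.1, j)) * (d w.2 - ∑' i, P (i, w.2)))

variable {c d : ℕ → ℝ≥0∞} {P G : ℕ × ℕ → ℝ≥0∞}

lemma tsum_comp_swap {α β : Type*} (f : α × β → ℝ≥0∞) :
    ∑' w : β × α, f w.swap = ∑' w, f w :=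
  (Equiv.prodComm β α).tsum_eq f

lemma IsDiscreteSubPlan.swap (hP : IsDiscreteSubPlan c d P) :
    IsDiscreteSubPlan d c (P ∘ Prod.swap) :=
  ⟨hP.2, hP.1⟩

lemma IsDiscreteCoupling.swap (hG : IsDiscreteCoupling c d G) :
    IsDiscreteCoupling d c (G ∘ Prod.swap) :=
  ⟨hG.2, hG.1⟩

lemma IsDiscreteCoupling.isDiscreteSubPlan_of_le (hG : IsDiscreteCoupling c d G) (hPG : P ≤ G) :
    IsDiscreteSubPlan c d P :=
  ⟨fun i => (ENNReal.tsum_le_tsum fun _ => hPG _).trans (hG.1 i).le,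
    fun j => (ENNReal.tsum_le_tsum fun _ => hPG _).trans (hG.2 j).le⟩

lemma IsDiscreteCoupling.tsum_right_eq (hG : IsDiscreteCoupling c d G) :
    ∑' j, d j = ∑' i, c i := by
  simp_rw [← hG.1, ← hG.2]
  exact ENNReal.tsum_comm

lemma completePlan_swap (w : ℕ × ℕ) :
    completePlan d c (P ∘ Prod.swap) w.swap = completePlan c d P w := by
  simp only [completePlan, Function.comp_apply, Prod.fst_swap, Prod.snd_swap, Prod.swap_prod_mk,
    Prod.swap_swap, tsum_comp_swap P]
  ring

lemma IsDiscreteSubPlan.tsum_sub_row_eq (hP : IsDiscreteSubPlan c d P) (hc : ∑' i, c i = 1) :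
    ∑' i, (c i - ∑' j, P (i, j)) = 1 - ∑' v, P v := by
  have hmass : ∑' i, ∑' j, P (i, j) ≤ 1 := hc ▸ ENNReal.tsum_le_tsum hP.1
  rw [ENNReal.tsum_sub (ne_top_of_le_ne_top one_ne_top hmass) hP.1, hc, ENNReal.tsum_prod']

lemma IsDiscreteSubPlan.tsum_sub_col_eq (hP : IsDiscreteSubPlan c d P) (hd : ∑' j, d j = 1) :
    ∑' j, (d j - ∑' i, P (i, j)) = 1 - ∑' v, P v := by
  simpa only [Function.comp_apply, Prod.swap_prod_mk, tsum_comp_swap P] using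
    hP.swap.tsum_sub_row_eq hd

lemma IsDiscreteSubPlan.tsum_completePlan_row (hP : IsDiscreteSubPlan c d P)
    (hc : ∑' i, c i = 1) (hd : ∑' j, d j = 1) (i : ℕ) :
    ∑' j, completePlan c d P (i, j) = c i := by
  set t := 1 - ∑' v, P v
  have hrow : ∑' j, completePlan c d P (i, j) =
      ∑' j, P (i, j) + (c i - ∑' j, P (i, j)) * (t⁻¹ * t) := by
    simp only [completePlan]
    rw [ENNReal.tsum_add, ENNReal.tsum_mul_left, ENNReal.tsum_mul_left, hP.tsum_sub_col_eq hd]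
    ring
  rw [hrow]
  rcases eq_or_ne (c i - ∑' j, P (i, j)) 0 with hres | hres
  · rw [hres, zero_mul, add_zero]
    exact le_antisymm (hP.1 i) (tsub_eq_zero_iff_le.1 hres)
  · have hle : c i - ∑' j, P (i, j) ≤ t := (ENNReal.le_tsum i).trans_eq (hP.tsum_sub_row_eq hc)
    have ht : t ≠ 0 := fun ht => hres (nonpos_iff_eq_zero.1 (ht ▸ hle))
    rw [ENNReal.inv_mul_cancel ht (ne_top_of_le_ne_top one_ne_top tsub_le_self), mul_one,
      add_tsub_cancel_of_le (hP.1 i)]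

lemma IsDiscreteSubPlan.isDiscreteCoupling_completePlan (hP : IsDiscreteSubPlan c d P)
    (hc : ∑' i, c i = 1) (hd : ∑' j, d j = 1) :
    IsDiscreteCoupling c d (completePlan c d P) := by
  refine ⟨hP.tsum_completePlan_row hc hd, fun j => ?_⟩
  simpa only [← completePlan_swap (P := P), Prod.swap_prod_mk] using
    hP.swap.tsum_completePlan_row hd hc j

lemma IsDiscreteCoupling.tsum_sub_row_mul_eq (hG : IsDiscreteCoupling c d G)
    (hc : ∀ i, c i ≠ ⊤) (hPG : P ≤ G) (m : ℕ → ℝ≥0∞) :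
    ∑' i, (c i - ∑' j, P (i, j)) * m i = ∑' w, (G w - P w) * m w.1 := by
  have hres : ∀ i, c i - ∑' j, P (i, j) = ∑' j, (G (i, j) - P (i, j)) := fun i => by
    rw [ENNReal.tsum_sub _ fun j => hPG _, hG.1 i]
    exact ne_top_of_le_ne_top (hc i) ((hG.isDiscreteSubPlan_of_le hPG).1 i)
  simp_rw [hres, ← ENNReal.tsum_mul_right]
  exact (ENNReal.tsum_prod' (f := fun w => (G w - P w) * m w.1)).symm

lemma IsDiscreteCoupling.tsum_sub_col_mul_eq (hG : IsDiscreteCoupling c d G)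
    (hd : ∀ j, d j ≠ ⊤) (hPG : P ≤ G) (m : ℕ → ℝ≥0∞) :
    ∑' j, (d j - ∑' i, P (i, j)) * m j = ∑' w, (G w - P w) * m w.2 := by
  rw [← tsum_comp_swap fun w => (G w - P w) * m w.2]
  exact hG.swap.tsum_sub_row_mul_eq hd (fun w => hPG w.swap) m

lemma IsDiscreteCoupling.tsum_mul_add_eq (hG : IsDiscreteCoupling c d G) (m : ℕ → ℝ≥0∞) :
    ∑' w, G w * (m w.1 + m w.2) = ∑' i, c i * m i + ∑' j, d j * m j := by
  simp_rw [mul_add, ENNReal.tsum_add, ← hG.1, ← hG.2, ← ENNReal.tsum_mul_right]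
  rw [ENNReal.tsum_prod', ENNReal.tsum_prod', ENNReal.tsum_comm (f := fun i j => G (i, j) * m j)]

lemma IsDiscreteCoupling.discreteCost_completePlan_le {D : ℕ × ℕ → ℝ≥0∞} {m : ℕ → ℝ≥0∞}
    (hG : IsDiscreteCoupling c d G) (hc : ∑' i, c i = 1) (hPG : P ≤ G)
    (hD : ∀ i j, D (i, j) ≤ m i + m j) :
    discreteCost D (completePlan c d P) ≤
      discreteCost D G + ∑' w, (G w - P w) * (m w.1 + m w.2) := by
  have hd : ∑' j, d j = 1 := hG.tsum_right_eq.trans hc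
  have hP := hG.isDiscreteSubPlan_of_le hPG
  set t := 1 - ∑' v, P v
  set c' := fun i => c i - ∑' j, P (i, j)
  set d' := fun j => d j - ∑' i, P (i, j)
  have hprod : ∑' w : ℕ × ℕ, c' w.1 * d' w.2 * D w ≤
      t * (∑' i, c' i * m i + ∑' j, d' j * m j) := calc
    ∑' w : ℕ × ℕ, c' w.1 * d' w.2 * D w
        ≤ ∑' w : ℕ × ℕ, (c' w.1 * m w.1 * d' w.2 + c' w.1 * (d' w.2 * m w.2)) :=
      ENNReal.tsum_le_tsum fun w => by
        calc c' w.1 * d' w.2 * D w ≤ c' w.1 * d' w.2 * (m w.1 + m w.2) := by gcongr; exact hD _ _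
          _ = _ := by ring
    _ = (∑' i, c' i * m i) * ∑' j, d' j + (∑' i, c' i) * ∑' j, d' j * m j := by
      simp_rw [ENNReal.tsum_add, ENNReal.tsum_prod', ENNReal.tsum_mul_left,
        ENNReal.tsum_mul_right]
    _ = t * (∑' i, c' i * m i + ∑' j, d' j * m j) := by
      rw [hP.tsum_sub_row_eq hc, hP.tsum_sub_col_eq hd]; ring
  have hc_top : ∀ i, c i ≠ ⊤ := fun i => ne_top_of_le_ne_top one_ne_top (hc ▸ ENNReal.le_tsum i)
  have hd_top : ∀ j, d j ≠ ⊤ := fun j => ne_top_of_le_ne_top one_ne_top (hd ▸ ENNReal.le_tsum j)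
  calc discreteCost D (completePlan c d P)
      = ∑' w, P w * D w + t⁻¹ * ∑' w : ℕ × ℕ, c' w.1 * d' w.2 * D w := by
        simp only [discreteCost, completePlan]
        rw [← ENNReal.tsum_mul_left, ← ENNReal.tsum_add]
        congr 1; ext w; ring
    _ ≤ ∑' w, G w * D w + (t⁻¹ * t) * (∑' i, c' i * m i + ∑' j, d' j * m j) := by
        rw [mul_assoc]
        gcongr with w
        exact hPG w
    _ ≤ ∑' w, G w * D w + (∑' i, c' i * m i + ∑' j, d' j * m j) := by
        gcongr
        exact mul_le_of_le_one_left' (ENNReal.inv_mul_le_one t)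
    _ = discreteCost D G + ∑' w, (G w - P w) * (m w.1 + m w.2) := by
        rw [hG.tsum_sub_row_mul_eq hc_top hPG, hG.tsum_sub_col_mul_eq hd_top hPG,
          ← ENNReal.tsum_add]
        simp_rw [mul_add]
        rfl

end DiscreteCoupling

section DiscreteSelection

lemma exists_finsupp_rat_le_tsum_sub_mul_le {ι : Type*} (G B : ι → ℝ≥0∞) (hG : ∀ w, G w ≠ ⊤)
    (hGB : ∑' w, G w * B w ≠ ⊤) {δ : ℝ≥0∞} (hδ : δ ≠ 0) :
    ∃ p : ι →₀ ℚ, (∀ w, ENNReal.ofReal (p w) ≤ G w) ∧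
      ∑' w, (G w - ENNReal.ofReal (p w)) * B w ≤ δ := by
  classical
  obtain ⟨F, hF⟩ : ∃ F : Finset ι, ∑' w : {w // w ∉ F}, G w * B w ≤ δ / 2 :=
    ((ENNReal.tendsto_tsum_compl_atTop_zero hGB).eventually
      (eventually_le_nhds (ENNReal.half_pos hδ))).exists
  have hη : δ / 2 / F.card ≠ 0 := ENNReal.div_ne_zero.2 ⟨(ENNReal.half_pos hδ).ne', by simp⟩
  choose q hqG hq using fun w => ENNReal.exists_rat_le_sub_mul_le (hG w)
    (ne_top_of_le_ne_top hGB (ENNReal.le_tsum w)) hη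
  let p : ι →₀ ℚ := Finsupp.onFinset F (fun w => if w ∈ F then q w else 0) fun w hw => by
    by_contra hwF; exact hw (if_neg hwF)
  have hp : ∀ w, (p w : ℝ) = if w ∈ F then (q w : ℝ) else 0 := fun w => by
    simp only [p, Finsupp.onFinset_apply]; split_ifs <;> simp
  refine ⟨p, fun w => ?_, ?_⟩
  · rw [hp]; split_ifs
    · exact hqG w
    · simp
  have hin : ∑ w ∈ F, (G w - ENNReal.ofReal (p w)) * B w ≤ δ / 2 := calc
    ∑ w ∈ F, (G w - ENNReal.ofReal (p w)) * B w ≤ ∑ _w ∈ F, δ / 2 / F.card :=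
      Finset.sum_le_sum fun w hw => by rw [hp, if_pos hw]; exact hq w
    _ ≤ δ / 2 := by rw [Finset.sum_const, nsmul_eq_mul]; exact ENNReal.mul_div_le
  have hout : ∑' w : ↥(F : Set ι)ᶜ, (G w - ENNReal.ofReal (p w)) * B w ≤ δ / 2 :=
    (ENNReal.tsum_le_tsum fun w => by gcongr; exact tsub_le_self).trans hF
  rw [← ENNReal.sum_add_tsum_compl F, ← ENNReal.add_halves δ]
  exact add_le_add hin hout

lemma exists_measurable_select_le_add {X Y : Type*} [MeasurableSpace X] [MeasurableSpace Y]
    (F : ℕ → X → Y) (hF : ∀ n, Measurable (F n)) {C : Y → ℝ≥0∞} (hC : Measurable C)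
    {ε : ℝ≥0∞} (hε : ε ≠ 0) :
    ∃ f : X → Y, Measurable f ∧ ∀ x, (∃ n, f x = F n x) ∧ ∀ n, C (f x) ≤ C (F n x) + ε := by
  classical
  let good : ℕ → X → Prop := fun n x => C (F n x) ≤ (⨅ m, C (F m x)) + ε
  have hgood : ∀ x, ∃ n, good n x := fun x => by
    rcases eq_or_ne (⨅ m, C (F m x)) ⊤ with htop | htop
    · exact ⟨0, by simp [good, htop]⟩
    · exact (iInf_lt_iff.1 (ENNReal.lt_add_right htop hε)).imp fun _ => le_of_lt
  have hmeas : ∀ n, MeasurableSet {x | good n x} := fun n =>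
    measurableSet_le (hC.comp (hF n)) ((Measurable.iInf fun m => hC.comp (hF m)).add_const ε)
  refine ⟨fun x => F (Nat.find (hgood x)) x, Measurable.find hF hmeas hgood, fun x =>
    ⟨⟨_, rfl⟩, fun n => (Nat.find_spec (hgood x)).trans ?_⟩⟩
  gcongr
  exact iInf_le _ n

open Classical in
noncomputable def completeIfSubPlan (P : ℕ × ℕ → ℝ≥0∞) (cd : (ℕ → ℝ≥0∞) × (ℕ → ℝ≥0∞)) :
    ℕ × ℕ → ℝ≥0∞ :=
  if IsDiscreteSubPlan cd.1 cd.2 P then completePlan cd.1 cd.2 P else completePlan cd.1 cd.2 0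

lemma completeIfSubPlan_of_isDiscreteSubPlan {c d : ℕ → ℝ≥0∞} {P : ℕ × ℕ → ℝ≥0∞}
    (hP : IsDiscreteSubPlan c d P) : completeIfSubPlan P (c, d) = completePlan c d P :=
  if_pos hP

lemma isDiscreteCoupling_completeIfSubPlan {c d : ℕ → ℝ≥0∞} (P : ℕ × ℕ → ℝ≥0∞)
    (hc : ∑' i, c i = 1) (hd : ∑' j, d j = 1) :
    IsDiscreteCoupling c d (completeIfSubPlan P (c, d)) := by
  by_cases hP : IsDiscreteSubPlan c d P
  · rw [completeIfSubPlan_of_isDiscreteSubPlan hP]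
    exact hP.isDiscreteCoupling_completePlan hc hd
  · have h0 : IsDiscreteSubPlan c d 0 := ⟨fun i => by simp, fun j => by simp⟩
    rw [completeIfSubPlan, if_neg hP]
    exact h0.isDiscreteCoupling_completePlan hc hd

lemma measurable_completeIfSubPlan (P : ℕ × ℕ → ℝ≥0∞) : Measurable (completeIfSubPlan P) := by
  have hcomplete : ∀ P, Measurable fun cd : (ℕ → ℝ≥0∞) × (ℕ → ℝ≥0∞) =>
      completePlan cd.1 cd.2 P := fun P => by
    refine measurable_pi_lambda _ fun w => ?_
    unfold completePlan
    fun_prop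
  have hsub : MeasurableSet {cd : (ℕ → ℝ≥0∞) × (ℕ → ℝ≥0∞) | IsDiscreteSubPlan cd.1 cd.2 P} := by
    simp only [IsDiscreteSubPlan, Set.ofPred_and, Set.ofPred_forall]
    exact .inter (.iInter fun i => measurableSet_le measurable_const (by fun_prop))
      (.iInter fun j => measurableSet_le measurable_const (by fun_prop))
  exact Measurable.ite hsub (hcomplete P) (hcomplete 0)

lemma measurable_discreteCost (D : ℕ × ℕ → ℝ≥0∞) : Measurable (discreteCost D) :=
  Measurable.tsum fun w => (measurable_pi_apply w).mul_const _

lemma exists_measurable_discreteCoupling_select {D : ℕ × ℕ → ℝ≥0∞} {m : ℕ → ℝ≥0∞}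
    (hD : ∀ i j, D (i, j) ≤ m i + m j) {δ : ℝ≥0∞} (hδ : δ ≠ 0) :
    ∃ E : (ℕ → ℝ≥0∞) × (ℕ → ℝ≥0∞) → ℕ × ℕ → ℝ≥0∞, Measurable E ∧
      ∀ c d, ∑' i, c i = 1 → ∑' j, d j = 1 → IsDiscreteCoupling c d (E (c, d)) ∧
        ∀ G, IsDiscreteCoupling c d G → ∑' i, c i * m i ≠ ⊤ → ∑' j, d j * m j ≠ ⊤ →
          discreteCost D (E (c, d)) ≤ discreteCost D G + δ := by
  obtain ⟨p, hp⟩ := exists_surjective_nat ((ℕ × ℕ) →₀ ℚ)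
  let P : ℕ → ℕ × ℕ → ℝ≥0∞ := fun n w => ENNReal.ofReal (p n w)
  obtain ⟨E, hE, hEsel⟩ := exists_measurable_select_le_add (fun n => completeIfSubPlan (P n))
    (fun n => measurable_completeIfSubPlan (P n)) (measurable_discreteCost D)
    (ENNReal.half_pos hδ).ne'
  refine ⟨E, hE, fun c d hc hd => ?_⟩
  obtain ⟨⟨n₀, hn₀⟩, hEle⟩ := hEsel (c, d)
  refine ⟨hn₀ ▸ isDiscreteCoupling_completeIfSubPlan _ hc hd, fun G hG hcm hdm => ?_⟩
  have hG_top : ∀ w, G w ≠ ⊤ := fun w => ne_top_of_le_ne_top one_ne_top <|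
    (ENNReal.le_tsum w.2).trans ((hG.1 w.1).trans_le ((ENNReal.le_tsum w.1).trans_eq hc))
  have hGm : ∑' w, G w * (m w.1 + m w.2) ≠ ⊤ := by
    rw [hG.tsum_mul_add_eq]; exact ENNReal.add_ne_top.2 ⟨hcm, hdm⟩
  obtain ⟨q, hqG, hq⟩ := exists_finsupp_rat_le_tsum_sub_mul_le G _ hG_top hGm
    (ENNReal.half_pos hδ).ne'
  obtain ⟨n, rfl⟩ := hp q
  calc discreteCost D (E (c, d)) ≤ discreteCost D (completeIfSubPlan (P n) (c, d)) + δ / 2 :=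
        hEle n
    _ ≤ discreteCost D G + δ / 2 + δ / 2 := by
        rw [completeIfSubPlan_of_isDiscreteSubPlan (hG.isDiscreteSubPlan_of_le hqG)]
        gcongr
        exact (hG.discreteCost_completePlan_le hc hqG hD).trans (by gcongr)
    _ = discreteCost D G + δ := by rw [add_assoc, ENNReal.add_halves]

end DiscreteSelection

section Quantization

variable {α ι : Type*} [MeasurableSpace α] [MeasurableSpace ι] [MeasurableSingletonClass ι]
  {q : α → ι}

lemma exists_measurable_quantizer {S : Type*} [PseudoEMetricSpace S] [MeasurableSpace S]
    [TopologicalSpace.SeparableSpace S] [Nonempty S] [OpensMeasurableSpace S] {ε : ℝ≥0∞}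
    (hε : ε ≠ 0) : ∃ (q : S → ℕ) (z : ℕ → S), Measurable q ∧ ∀ u, edist u (z (q u)) ≤ ε := by
  classical
  let z := TopologicalSpace.denseSeq S
  have hcover : ∀ u, ∃ n, edist u (z n) < ε := fun u => by
    obtain ⟨_, ⟨n, rfl⟩, hn⟩ := EMetric.mem_closure_iff.1
      ((TopologicalSpace.denseRange_denseSeq S).closure_eq ▸ Set.mem_univ u) ε
      (pos_iff_ne_zero.2 hε)
    exact ⟨n, hn⟩
  refine ⟨fun u => Nat.find (hcover u), z, measurable_find hcover fun n => ?_,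
    fun u => (Nat.find_spec (hcover u)).le⟩
  exact (isOpen_lt (continuous_id.edist continuous_const) continuous_const).measurableSet

noncomputable def cellMass (q : α → ι) (μ : Measure α) (i : ι) : ℝ≥0∞ := μ (q ⁻¹' {i})

lemma lintegral_comp_eq_tsum_cellMass [Countable ι] (hq : Measurable q) (μ : Measure α)
    (f : ι → ℝ≥0∞) : ∫⁻ a, f (q a) ∂μ = ∑' i, cellMass q μ i * f i := by
  rw [← lintegral_map (measurable_of_countable f) hq, lintegral_countable']
  simp_rw [Measure.map_apply hq (measurableSet_singleton _), cellMass, mul_comm]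

lemma tsum_measure_preimage_singleton_inter [Countable ι] (hq : Measurable q) (μ : Measure α)
    (s : Set α) : ∑' i, μ (q ⁻¹' {i} ∩ s) = μ s := by
  simpa [cellMass, Measure.restrict_apply (hq (measurableSet_singleton _))] using
    (lintegral_comp_eq_tsum_cellMass hq (μ.restrict s) fun _ => 1).symm

lemma tsum_cellMass [Countable ι] (hq : Measurable q) (μ : Measure α) :
    ∑' i, cellMass q μ i = μ .univ := by
  simpa [cellMass] using tsum_measure_preimage_singleton_inter hq μ .univ

lemma measurable_cellMass {X : Type*} [MeasurableSpace X] {μ : X → Measure α}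
    (hμ : Measurable μ) (hq : Measurable q) : Measurable fun x => cellMass q (μ x) :=
  measurable_pi_lambda _ fun _ => (Measure.measurable_coe (hq (measurableSet_singleton _))).comp hμ

lemma isDiscreteCoupling_cellMass {q : α → ℕ} (hq : Measurable q) {γ : Measure (α × α)}
    {μ ν : Measure α} (h₁ : γ.fst = μ) (h₂ : γ.snd = ν) :
    IsDiscreteCoupling (cellMass q μ) (cellMass q ν) (cellMass (Prod.map q q) γ) := by
  have hq₁ : Measurable fun p : α × α => q p.1 := hq.comp measurable_fst
  have hq₂ : Measurable fun p : α × α => q p.2 := hq.comp measurable_snd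
  constructor
  · intro i
    rw [← h₁, cellMass, Measure.fst_apply (hq (measurableSet_singleton i))]
    refine Eq.trans ?_ (tsum_measure_preimage_singleton_inter hq₂ γ _)
    refine tsum_congr fun j => congrArg γ ?_
    ext p
    simp [Prod.ext_iff, and_comm]
  · intro j
    rw [← h₂, cellMass, Measure.snd_apply (hq (measurableSet_singleton j))]
    refine Eq.trans ?_ (tsum_measure_preimage_singleton_inter hq₁ γ _)
    refine tsum_congr fun i => congrArg γ ?_
    ext p
    simp [Prod.ext_iff]

lemma HasFiniteSecondMoment.tsum_cellMass_mul_ne_top {S : Type*} [PseudoMetricSpace S]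
    [MeasurableSpace S] [OpensMeasurableSpace S] {μ : Measure S} [IsProbabilityMeasure μ]
    (hμ : HasFiniteSecondMoment μ) {q : S → ℕ} (hq : Measurable q) {z : ℕ → S} {ε : ℝ≥0∞}
    (hε : ε ≠ ⊤) (hz : ∀ u, edist u (z (q u)) ≤ ε) (y : S) :
    ∑' i, cellMass q μ i * edist (z i) y ^ 2 ≠ ⊤ := by
  obtain ⟨b, hb⟩ := hμ
  set r := (∫⁻ u, edist u b ^ 2 ∂μ) ^ (1 / 2 : ℝ)
  have hr : r ≠ ⊤ := ENNReal.rpow_ne_top_of_nonneg (by norm_num) hb.ne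
  rw [← lintegral_comp_eq_tsum_cellMass hq μ fun i => edist (z i) y ^ 2]
  refine ne_top_of_le_ne_top ?_ (lintegral_sq_le_of_le_add_const (r := r)
    (k := ε + edist b y) (continuous_id.edist continuous_const).measurable.aemeasurable
    (ENNReal.rpow_one_half_le_iff.1 le_rfl) fun u => ?_)
  · exact pow_ne_top (add_ne_top.2 ⟨hr, add_ne_top.2 ⟨hε, edist_ne_top b y⟩⟩)
  · calc edist (z (q u)) y ≤ edist (z (q u)) u + edist u b + edist b y := edist_triangle4 _ _ _ _
      _ ≤ ε + edist u b + edist b y := by rw [edist_comm]; gcongr; exact hz u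
      _ = edist u b + (ε + edist b y) := by ring

end Quantization

section LiftPlan

variable {S : Type*} [MeasurableSpace S] {q : S → ℕ} {μ ν : Measure S} {E : ℕ × ℕ → ℝ≥0∞}

noncomputable def liftPlan (q : S → ℕ) (μ ν : Measure S) (E : ℕ × ℕ → ℝ≥0∞) :
    Measure (S × S) :=
  Measure.sum fun w => E w • (μ[|q ⁻¹' {w.1}]).prod (ν[|q ⁻¹' {w.2}])

lemma mul_cond_univ_of_le {s : Set S} {a : ℝ≥0∞} (ha : a ≤ μ s) (hs : μ s ≠ ⊤) :
    a * μ[|s] .univ = a := by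
  rcases eq_or_ne a 0 with rfl | ha0
  · exact zero_mul _
  have := cond_isProbabilityMeasure_of_finite (ne_bot_of_le_ne_bot ha0 ha) hs
  rw [measure_univ, mul_one]

lemma mul_cond_self_of_le {s : Set S} (hs : MeasurableSet s) {a : ℝ≥0∞} (ha : a ≤ μ s)
    (hμs : μ s ≠ ⊤) : a * μ[s|s] = a := by
  have hself : μ[s|s] = μ[|s] .univ := by
    rw [cond_apply hs, cond_apply hs, Set.inter_self, Set.inter_univ]
  rw [hself]
  exact mul_cond_univ_of_le ha hμs

lemma cond_preimage_singleton_of_ne (hq : Measurable q) {i j : ℕ} (h : i ≠ j) :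
    μ[q ⁻¹' {j}|q ⁻¹' {i}] = 0 := by
  rw [cond_apply (hq (measurableSet_singleton i)), ← Set.preimage_inter,
    show ({i} ∩ {j} : Set ℕ) = ∅ by simpa using h.symm, Set.preimage_empty, measure_empty,
    mul_zero]

lemma liftPlan_fst [IsFiniteMeasure μ] [IsFiniteMeasure ν] (hq : Measurable q)
    (hE : IsDiscreteCoupling (cellMass q μ) (cellMass q ν) E) : (liftPlan q μ ν E).fst = μ := by
  ext B hB
  have hcol : ∀ w : ℕ × ℕ, E w ≤ ν (q ⁻¹' {w.2}) := fun w =>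
    (ENNReal.le_tsum w.1).trans (hE.2 w.2).le
  rw [Measure.fst_apply hB, liftPlan, Measure.sum_apply _ (measurable_fst hB)]
  calc ∑' w : ℕ × ℕ, (E w • (μ[|q ⁻¹' {w.1}]).prod (ν[|q ⁻¹' {w.2}])) (Prod.fst ⁻¹' B)
      = ∑' w : ℕ × ℕ, μ[B|q ⁻¹' {w.1}] * E w := by
        refine tsum_congr fun w => ?_
        rw [Measure.smul_apply, smul_eq_mul, ← Set.prod_univ, Measure.prod_prod, mul_comm,
          mul_assoc, mul_comm _ (E w), mul_cond_univ_of_le (hcol w) (measure_ne_top _ _)]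
    _ = ∑' i, μ[B|q ⁻¹' {i}] * cellMass q μ i := by
        rw [ENNReal.tsum_prod']
        simp_rw [ENNReal.tsum_mul_left, hE.1]
    _ = μ B := by
        simp_rw [cellMass, cond_mul_eq_inter (hq (measurableSet_singleton _))]
        exact tsum_measure_preimage_singleton_inter hq μ B

lemma liftPlan_map_swap [IsFiniteMeasure μ] [IsFiniteMeasure ν] :
    (liftPlan q μ ν E).map Prod.swap = liftPlan q ν μ (E ∘ Prod.swap) := by
  rw [liftPlan, Measure.map_sum measurable_swap.aemeasurable]
  simp_rw [Measure.map_smul, Measure.prod_swap]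
  rw [liftPlan, ← Measure.sum_comp_equiv (Equiv.prodComm ℕ ℕ)]
  rfl

lemma liftPlan_snd [IsFiniteMeasure μ] [IsFiniteMeasure ν] (hq : Measurable q)
    (hE : IsDiscreteCoupling (cellMass q μ) (cellMass q ν) E) : (liftPlan q μ ν E).snd = ν := by
  rw [← Measure.fst_map_swap, liftPlan_map_swap]
  exact liftPlan_fst hq hE.swap

lemma cellMass_liftPlan [IsFiniteMeasure μ] [IsFiniteMeasure ν] (hq : Measurable q)
    (hE : IsDiscreteCoupling (cellMass q μ) (cellMass q ν) E) :
    cellMass (Prod.map q q) (liftPlan q μ ν E) = E := by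
  funext w
  have hcell : Prod.map q q ⁻¹' {w} = (q ⁻¹' {w.1}) ×ˢ (q ⁻¹' {w.2}) := by
    ext p; simp [Prod.ext_iff]
  have hrow : E w ≤ μ (q ⁻¹' {w.1}) := (ENNReal.le_tsum w.2).trans (hE.1 w.1).le
  have hcol : E w ≤ ν (q ⁻¹' {w.2}) := (ENNReal.le_tsum w.1).trans (hE.2 w.2).le
  have hs := fun i => hq (measurableSet_singleton i)
  rw [cellMass, liftPlan, hcell, Measure.sum_apply _ ((hs _).prod (hs _)), tsum_eq_single w]
  · rw [Measure.smul_apply, smul_eq_mul, Measure.prod_prod, ← mul_assoc,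
      mul_cond_self_of_le (hs _) hrow (measure_ne_top _ _),
      mul_cond_self_of_le (hs _) hcol (measure_ne_top _ _)]
  · intro v hv
    rw [Measure.smul_apply, smul_eq_mul, Measure.prod_prod]
    rcases ne_or_eq v.1 w.1 with h1 | h1
    · rw [cond_preimage_singleton_of_ne hq h1, zero_mul, mul_zero]
    · rw [cond_preimage_singleton_of_ne hq fun h2 => hv (Prod.ext h1 h2), mul_zero, mul_zero]

lemma measurable_liftPlan {X : Type*} [MeasurableSpace X] {μ ν : X → Measure S}
    (hμ : Measurable μ) (hν : Measurable ν) {E : X → ℕ × ℕ → ℝ≥0∞} (hE : Measurable E)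
    (hq : Measurable q) : Measurable fun x => liftPlan q (μ x) (ν x) (E x) := by
  refine Measure.measurable_of_measurable_coe _ fun B hB => ?_
  simp_rw [liftPlan, Measure.sum_apply _ hB, Measure.smul_apply, smul_eq_mul]
  exact Measurable.tsum fun w => ((measurable_pi_apply w).comp hE).mul <|
    (Measure.measurable_coe hB).comp <| measurable_prod_cond hμ hν
      (hq (measurableSet_singleton _)) (hq (measurableSet_singleton _))

end LiftPlan

section QuantizedCost

variable {S : Type*} [PseudoEMetricSpace S] {q : S → ℕ} {z : ℕ → S} {ε : ℝ≥0∞}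

lemma edist_le_edist_comp_add (hz : ∀ u, edist u (z (q u)) ≤ ε) (u v : S) :
    edist u v ≤ edist (z (q u)) (z (q v)) + 2 * ε := calc
  edist u v ≤ edist u (z (q u)) + edist (z (q u)) (z (q v)) + edist (z (q v)) v :=
    edist_triangle4 _ _ _ _
  _ ≤ ε + edist (z (q u)) (z (q v)) + ε := by rw [edist_comm _ v]; gcongr <;> apply hz
  _ = edist (z (q u)) (z (q v)) + 2 * ε := by ring

lemma edist_comp_le_edist_add (hz : ∀ u, edist u (z (q u)) ≤ ε) (u v : S) :
    edist (z (q u)) (z (q v)) ≤ edist u v + 2 * ε := calc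
  edist (z (q u)) (z (q v)) ≤ edist (z (q u)) u + edist u v + edist v (z (q v)) :=
    edist_triangle4 _ _ _ _
  _ ≤ ε + edist u v + ε := by rw [edist_comm _ u]; gcongr <;> apply hz
  _ = edist u v + 2 * ε := by ring

lemma discreteCost_cellMass_le [MeasurableSpace S] [TopologicalSpace.SeparableSpace S]
    [OpensMeasurableSpace S] (hq : Measurable q) (hz : ∀ u, edist u (z (q u)) ≤ ε)
    {γ : Measure (S × S)} [IsProbabilityMeasure γ] {a : ℝ≥0∞}
    (hγ : ∫⁻ p, edist p.1 p.2 ^ 2 ∂γ ≤ a ^ 2) :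
    discreteCost (fun w => edist (z w.1) (z w.2) ^ 2) (cellMass (Prod.map q q) γ) ≤
      (a + 2 * ε) ^ 2 := by
  rw [discreteCost, ← lintegral_comp_eq_tsum_cellMass (hq.prodMap hq)]
  exact lintegral_sq_le_of_le_add_const measurable_edist.aemeasurable hγ fun p =>
    edist_comp_le_edist_add hz p.1 p.2

lemma lintegral_liftPlan_le [MeasurableSpace S] {μ ν : Measure S} [IsProbabilityMeasure μ]
    [IsFiniteMeasure ν] (hq : Measurable q) (hz : ∀ u, edist u (z (q u)) ≤ ε)
    {E : ℕ × ℕ → ℝ≥0∞} (hE : IsDiscreteCoupling (cellMass q μ) (cellMass q ν) E) {a : ℝ≥0∞}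
    (hEa : discreteCost (fun w => edist (z w.1) (z w.2) ^ 2) E ≤ a ^ 2) :
    ∫⁻ p, edist p.1 p.2 ^ 2 ∂(liftPlan q μ ν E) ≤ (a + 2 * ε) ^ 2 := by
  have := isProbabilityMeasure_of_fst_eq (liftPlan_fst hq hE)
  refine lintegral_sq_le_of_le_add_const (f := fun p => edist (z (q p.1)) (z (q p.2)))
    ((measurable_of_countable fun w : ℕ × ℕ => edist (z w.1) (z w.2)).comp
      (hq.prodMap hq)).aemeasurable ?_ fun p => edist_le_edist_comp_add hz p.1 p.2
  refine (lintegral_comp_eq_tsum_cellMass (hq.prodMap hq) _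
    fun w : ℕ × ℕ => edist (z w.1) (z w.2) ^ 2).trans_le ?_
  rwa [cellMass_liftPlan hq hE]

end QuantizedCost

theorem exists_measurable_coupling_family {X S : Type*} [MeasurableSpace X]
    [PseudoMetricSpace S] [TopologicalSpace.SeparableSpace S] [Nonempty S] [MeasurableSpace S]
    [OpensMeasurableSpace S] {μ ν : X → Measure S} (hμ : Measurable μ) (hν : Measurable ν)
    [∀ x, IsProbabilityMeasure (μ x)] [∀ x, IsProbabilityMeasure (ν x)]
    (hμm : ∀ x, HasFiniteSecondMoment (μ x)) (hνm : ∀ x, HasFiniteSecondMoment (ν x))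
    {ε : ℝ≥0∞} (hε : ε ≠ 0) :
    ∃ Φ : X → Measure (S × S), Measurable Φ ∧ ∀ x, (Φ x).fst = μ x ∧ (Φ x).snd = ν x ∧
      ∫⁻ p, edist p.1 p.2 ^ 2 ∂(Φ x) ≤ (W2 (μ x) (ν x) + ε) ^ 2 := by
  -- error budget: `δ` for `γ`, `2 * δ` for each of the two quantizations, `δ` for the selection
  obtain ⟨δ, hδ, hδ_top, hδε⟩ : ∃ δ : ℝ≥0∞, δ ≠ 0 ∧ δ ≠ ⊤ ∧ 6 * δ ≤ ε :=
    ⟨min ε 1 / 6, by simp [hε],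
      ENNReal.div_ne_top (ne_top_of_le_ne_top one_ne_top (min_le_right _ _)) (by norm_num),
      by rw [ENNReal.mul_div_cancel (by norm_num) (by norm_num)]; exact min_le_left _ _⟩
  obtain ⟨q, z, hq, hz⟩ := exists_measurable_quantizer (S := S) hδ
  set m : ℕ → ℝ≥0∞ := fun i => 2 * edist (z i) (z 0) ^ 2
  have hD : ∀ i j, edist (z i) (z j) ^ 2 ≤ m i + m j := fun i j => calc
    edist (z i) (z j) ^ 2 ≤ (edist (z i) (z 0) + edist (z j) (z 0)) ^ 2 := by
      gcongr; exact edist_triangle_right _ _ _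
    _ ≤ m i + m j := by rw [← mul_add]; exact ENNReal.add_sq_le_two_mul _ _
  obtain ⟨E, hE, hEsel⟩ := exists_measurable_discreteCoupling_select
    (D := fun w => edist (z w.1) (z w.2) ^ 2) (fun i j => hD i j) (pow_ne_zero 2 hδ)
  have hsum : ∀ (ρ : Measure S) [IsProbabilityMeasure ρ], ∑' i, cellMass q ρ i = 1 :=
    fun ρ _ => (tsum_cellMass hq ρ).trans measure_univ
  have hmom : ∀ (ρ : Measure S) [IsProbabilityMeasure ρ], HasFiniteSecondMoment ρ →
      ∑' i, cellMass q ρ i * m i ≠ ⊤ := fun ρ _ hρ => by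
    simp_rw [m, mul_left_comm _ (2 : ℝ≥0∞), ENNReal.tsum_mul_left]
    exact mul_ne_top ofNat_ne_top (hρ.tsum_cellMass_mul_ne_top hq hδ_top hz (z 0))
  refine ⟨fun x => liftPlan q (μ x) (ν x) (E (cellMass q (μ x), cellMass q (ν x))),
    measurable_liftPlan hμ hν
      (hE.comp ((measurable_cellMass hμ hq).prodMk (measurable_cellMass hν hq))) hq,
    fun x => ?_⟩
  obtain ⟨hEc, hEcost⟩ := hEsel _ _ (hsum (μ x)) (hsum (ν x))
  refine ⟨liftPlan_fst hq hEc, liftPlan_snd hq hEc, ?_⟩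
  obtain ⟨γ, hγ₁, hγ₂, hγ⟩ := exists_coupling_lintegral_le_sq_W2_add (μ := μ x) (ν := ν x) hδ
  have := isProbabilityMeasure_of_fst_eq hγ₁
  have hG := isDiscreteCoupling_cellMass hq hγ₁ hγ₂
  calc ∫⁻ p, edist p.1 p.2 ^ 2 ∂(liftPlan q (μ x) (ν x) _)
      ≤ (W2 (μ x) (ν x) + δ + 2 * δ + δ + 2 * δ) ^ 2 := by
        refine lintegral_liftPlan_le hq hz hEc
          ((hEcost _ hG (hmom _ (hμm x)) (hmom _ (hνm x))).trans ?_)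
        exact (add_le_add (discreteCost_cellMass_le hq hz hγ) le_rfl).trans
          (ENNReal.sq_add_sq_le_add_sq _ _)
    _ ≤ (W2 (μ x) (ν x) + ε) ^ 2 := by
        refine pow_le_pow_left' ?_ 2
        calc W2 (μ x) (ν x) + δ + 2 * δ + δ + 2 * δ = W2 (μ x) (ν x) + 6 * δ := by ring
          _ ≤ W2 (μ x) (ν x) + ε := by gcongr

theorem stmt_1_general
    {S : Type*} [MetricSpace S] [PolishSpace S] [MeasurableSpace S] [BorelSpace S]
    {A : Type*} [MetricSpace A] [PolishSpace A] [MeasurableSpace A] [BorelSpace A]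
    (T : S → A → Measure S) (hT : Measurable (fun p : S × A => T p.1 p.2))
    [∀ s a, IsProbabilityMeasure (T s a)]
    (π : S → Measure A) [∀ s, IsProbabilityMeasure (π s)]
    (hTmom : ∀ s a, HasFiniteSecondMoment (T s a))
    (LS LA Kπ : ℝ≥0)
    (hTLip : ∀ s s' : S, ∀ a a' : A,
      W2 (T s a) (T s' a') ≤ (LS : ℝ≥0∞) * edist s s' + (LA : ℝ≥0∞) * edist a a')
    (hπLip : ∀ s s' : S, W2 (π s) (π s') ≤ (Kπ : ℝ≥0∞) * edist s s')
    (s s' : S) :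
    W2 ((π s).bind (T s)) ((π s').bind (T s')) ≤
      ((LS : ℝ≥0∞) + (LA : ℝ≥0∞) * (Kπ : ℝ≥0∞)) * edist s s' := by
  have : Nonempty S := ⟨s⟩
  have hTs : Measurable (T s) := hT.comp measurable_prodMk_left
  have hTs' : Measurable (T s') := hT.comp measurable_prodMk_left
  refine ENNReal.le_of_forall_ne_zero_le_add_mul (C := LA + 1) (by simp) fun θ hθ => ?_
  obtain ⟨η, hη₁, hη₂, hη⟩ := exists_coupling_lintegral_le_sq_W2_add (μ := π s) (ν := π s') hθ
  have := isProbabilityMeasure_of_fst_eq hη₁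
  obtain ⟨Φ, hΦ, hΦc⟩ := exists_measurable_coupling_family (μ := fun p : A × A => T s p.1)
    (ν := fun p : A × A => T s' p.2) (hTs.comp measurable_fst) (hTs'.comp measurable_snd)
    (fun p => hTmom s p.1) (fun p => hTmom s' p.2) hθ
  refine W2_le_of_coupling (γ := η.bind Φ)
    (hη₁ ▸ Measure.fst_bind_of_fst_eq hΦ hTs fun p => (hΦc p).1)
    (hη₂ ▸ Measure.snd_bind_of_snd_eq hΦ hTs' fun p => (hΦc p).2.1) ?_
  calc ∫⁻ z, edist z.1 z.2 ^ 2 ∂(η.bind Φ)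
      ≤ (LA * (Kπ * edist s s' + θ) + (LS * edist s s' + θ)) ^ 2 := by
        refine lintegral_edist_sq_bind_le hΦ (hη.trans (by gcongr; exact hπLip s s'))
          fun p => (hΦc p).2.2.trans (pow_le_pow_left' ?_ 2)
        calc W2 (T s p.1) (T s' p.2) + θ ≤ LS * edist s s' + LA * edist p.1 p.2 + θ := by
              gcongr; exact hTLip s s' p.1 p.2
          _ = LA * edist p.1 p.2 + (LS * edist s s' + θ) := by ring
    _ = ((LS + LA * Kπ) * edist s s' + (LA + 1) * θ) ^ 2 := by ring

/-- if the dynamics `𝒯` are `(L_𝒮, L_𝒜)`-Lipschitz in the 2-Wasserstein sense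
and the policy `π` is `K_π`-Lipschitz, then for all `s, s'` the induced kernels satisfy
`W₂(P^π(s,·), P^π(s',·)) ≤ (L_𝒮 + L_𝒜 K_π) d_𝒮(s, s')`. -/
theorem stmt_1
    {S : Type*} [MetricSpace S] [PolishSpace S] [MeasurableSpace S] [BorelSpace S]
    {A : Type*} [MetricSpace A] [PolishSpace A] [MeasurableSpace A] [BorelSpace A]
    (T : S → A → Measure S) (hT : Measurable (fun p : S × A => T p.1 p.2))
    [∀ s a, IsProbabilityMeasure (T s a)]
    (π : S → Measure A) (hπ : Measurable π) [∀ s, IsProbabilityMeasure (π s)]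
    (hTmom : ∀ s a, HasFiniteSecondMoment (T s a))
    (hπmom : ∀ s, HasFiniteSecondMoment (π s))
    (LS LA Kπ : ℝ≥0)
    (hTLip : ∀ s s' : S, ∀ a a' : A,
      W2 (T s a) (T s' a') ≤ (LS : ℝ≥0∞) * edist s s' + (LA : ℝ≥0∞) * edist a a')
    (hπLip : ∀ s s' : S, W2 (π s) (π s') ≤ (Kπ : ℝ≥0∞) * edist s s')
    (s s' : S) :
    W2 ((π s).bind (T s)) ((π s').bind (T s')) ≤
      ((LS : ℝ≥0∞) + (LA : ℝ≥0∞) * (Kπ : ℝ≥0∞)) * edist s s' :=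
  stmt_1_general T hT π hTmom LS LA Kπ hTLip hπLip s s'
end

section
/- Let P be a Markov transition kernel on a measurable space 𝒮, and let μ and μ₁ be invariant probability measures with μ₁ absolutely continuous with respect to μ, with Radon–Nikodym density f = dμ₁/dμ. Then for every real constant c, the super-level set B_c = {s ∈ 𝒮 : f(s) > c} is μ-invariant, i.e., P(s, B_c) = 1 for μ-almost every s ∈ B_c. -/
open MeasureTheory ENNReal

/-- let `μ` and `μ₁` be invariant probability measures for the Markov kernel
`P`, with `μ₁` absolutely continuous with respect to `μ` and Radon–Nikodym density
`f = dμ₁/dμ`. Then for every real `c`, the super-level set `B_c = {s | f s > c}` is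
`μ`-invariant, i.e. `P(s, B_c) = 1` for `μ`-almost every `s ∈ B_c`. -/
theorem stmt_9
    {S : Type*} [MeasurableSpace S]
    (P : S → Measure S) (hP : Measurable P) [∀ s, IsProbabilityMeasure (P s)]
    (μ μ₁ : Measure S) [IsProbabilityMeasure μ] [IsProbabilityMeasure μ₁]
    (hμ : ∀ A : Set S, MeasurableSet A → μ A = ∫⁻ s, P s A ∂μ)
    (hμ₁ : ∀ A : Set S, MeasurableSet A → μ₁ A = ∫⁻ s, P s A ∂μ₁)
    (f : S → ℝ) (hf : Measurable f) (hf0 : ∀ s, 0 ≤ f s)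
    (hdens : μ₁ = μ.withDensity (fun s => ENNReal.ofReal (f s)))
    (c : ℝ) :
    ∀ᵐ s ∂(μ.restrict {s | c < f s}), P s {s | c < f s} = 1 := by
  rcases lt_or_ge c 0 with hc | hc
  · have hB : {s : S | c < f s} = Set.univ :=
      Set.eq_univ_of_forall fun s => lt_of_lt_of_le hc (hf0 s)
    rw [hB]
    filter_upwards with s
    exact measure_univ
  · set B : Set S := {s | c < f s} with hBdef
    have hBm : MeasurableSet B := measurableSet_lt measurable_const hf
    set k : S → ℝ≥0∞ := fun s => P s B with hkdef
    set φ : S → ℝ≥0∞ := fun s => ENNReal.ofReal (f s) with hφdef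
    have hkm : Measurable k := (Measure.measurable_coe hBm).comp hP
    have hφm : Measurable φ := hf.ennreal_ofReal
    have hk1 : ∀ s, k s ≤ 1 := fun s => prob_le_one
    set c' : ℝ≥0∞ := ENNReal.ofReal c with hc'def
    have hc't : c' ≠ ∞ := ofReal_ne_top
    have hφint : ∫⁻ s, φ s ∂μ = 1 := by
      rw [← setLIntegral_univ, ← withDensity_apply _ MeasurableSet.univ, ← hdens]
      exact measure_univ
    have h1 : μ₁ B = ∫⁻ s in B, φ s ∂μ := by rw [hdens, withDensity_apply _ hBm]
    have h2 : μ₁ B = ∫⁻ s, φ s * k s ∂μ := by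
      rw [hμ₁ B hBm, hdens, lintegral_withDensity_eq_lintegral_mul _ hφm hkm]
      rfl
    have h3 : μ B = ∫⁻ s, k s ∂μ := hμ B hBm
    -- splitting over B and its complement
    have hsplitk : (∫⁻ s in B, k s ∂μ) + ∫⁻ s in Bᶜ, k s ∂μ = μ B := by
      rw [lintegral_add_compl _ hBm, ← h3]
    have hsplitφk : (∫⁻ s in B, φ s * k s ∂μ) + ∫⁻ s in Bᶜ, φ s * k s ∂μ
        = ∫⁻ s, φ s * k s ∂μ := lintegral_add_compl _ hBm
    -- on Bᶜ, φ ≤ c'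
    have hcompl : ∫⁻ s in Bᶜ, φ s * k s ∂μ ≤ c' * ∫⁻ s in Bᶜ, k s ∂μ := by
      rw [← lintegral_const_mul c' hkm]
      refine setLIntegral_mono (measurable_const.mul hkm) fun s hs => ?_
      have : f s ≤ c := not_lt.mp hs
      exact mul_le_mul_left (ENNReal.ofReal_le_ofReal this) _
    -- key inequality
    have hineq : (∫⁻ s in B, φ s ∂μ) + c' * ∫⁻ s in B, k s ∂μ
        ≤ (∫⁻ s in B, φ s * k s ∂μ) + c' * μ B := by
      calc (∫⁻ s in B, φ s ∂μ) + c' * ∫⁻ s in B, k s ∂μ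
          = (∫⁻ s, φ s * k s ∂μ) + c' * ∫⁻ s in B, k s ∂μ := by rw [← h2, ← h1]
        _ = (∫⁻ s in B, φ s * k s ∂μ) + (∫⁻ s in Bᶜ, φ s * k s ∂μ)
            + c' * ∫⁻ s in B, k s ∂μ := by rw [hsplitφk]
        _ ≤ (∫⁻ s in B, φ s * k s ∂μ) + c' * (∫⁻ s in Bᶜ, k s ∂μ)
            + c' * ∫⁻ s in B, k s ∂μ := by gcongr
        _ = (∫⁻ s in B, φ s * k s ∂μ)
            + c' * ((∫⁻ s in B, k s ∂μ) + ∫⁻ s in Bᶜ, k s ∂μ) := by ring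
        _ = (∫⁻ s in B, φ s * k s ∂μ) + c' * μ B := by rw [hsplitk]
    -- rewrite as integrals of single functions over B
    have hL : ∫⁻ s in B, (φ s * k s + c') ∂μ
        = (∫⁻ s in B, φ s * k s ∂μ) + c' * μ B := by
      rw [lintegral_add_right _ measurable_const, setLIntegral_const]
    have hR : ∫⁻ s in B, (φ s + k s * c') ∂μ
        = (∫⁻ s in B, φ s ∂μ) + c' * ∫⁻ s in B, k s ∂μ := by
      rw [lintegral_add_left hφm, lintegral_mul_const c' hkm]
      ring
    -- finiteness
    have hfin : ∫⁻ s in B, (φ s * k s + c') ∂μ ≠ ∞ := by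
      rw [hL]
      have h1' : ∫⁻ s in B, φ s * k s ∂μ ≤ 1 := by
        calc ∫⁻ s in B, φ s * k s ∂μ ≤ ∫⁻ s in B, φ s ∂μ := by
              refine lintegral_mono fun s => ?_
              calc φ s * k s ≤ φ s * 1 := by gcongr; exact hk1 s
                _ = φ s := mul_one _
          _ ≤ ∫⁻ s, φ s ∂μ := setLIntegral_le_lintegral _ _
          _ = 1 := hφint
      exact ENNReal.add_ne_top.mpr ⟨ne_top_of_le_ne_top one_ne_top h1',
        ENNReal.mul_ne_top hc't (measure_ne_top μ B)⟩
    -- pointwise a.e. inequality on B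
    have hptle : (fun s => φ s * k s + c') ≤ᵐ[μ.restrict B] fun s => φ s + k s * c' := by
      refine (ae_restrict_iff' hBm).2 (ae_of_all _ fun s hs => ?_)
      have hfs : c < f s := hs
      have hc'φ : c' ≤ φ s := ENNReal.ofReal_le_ofReal hfs.le
      have hφt : φ s ≠ ∞ := ofReal_ne_top
      have hkt : k s ≠ ∞ := ne_of_lt (lt_of_le_of_lt (hk1 s) one_lt_top)
      rw [← ENNReal.toReal_le_toReal
        (ENNReal.add_ne_top.mpr ⟨ENNReal.mul_ne_top hφt hkt, hc't⟩)
        (ENNReal.add_ne_top.mpr ⟨hφt, ENNReal.mul_ne_top hkt hc't⟩)]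
      rw [ENNReal.toReal_add (ENNReal.mul_ne_top hφt hkt) hc't,
        ENNReal.toReal_add hφt (ENNReal.mul_ne_top hkt hc't),
        ENNReal.toReal_mul, ENNReal.toReal_mul]
      have hk01 : (k s).toReal ≤ 1 := by
        rw [← ENNReal.toReal_one]
        exact ENNReal.toReal_mono one_ne_top (hk1 s)
      have hcφ : c'.toReal ≤ (φ s).toReal := ENNReal.toReal_mono hφt hc'φ
      nlinarith [ENNReal.toReal_nonneg (a := k s)]
    -- conclude a.e. equality
    have heq : (fun s => φ s * k s + c') =ᵐ[μ.restrict B] fun s => φ s + k s * c' := by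
      refine ae_eq_of_ae_le_of_lintegral_le hptle hfin
        ((hφm.add (hkm.mul measurable_const)).aemeasurable) ?_
      rw [hL, hR]; exact hineq
    filter_upwards [heq, ae_restrict_mem hBm] with s hs hsB
    -- now extract k s = 1
    have hfs : c < f s := hsB
    have hkt : k s ≠ ∞ := ne_of_lt (lt_of_le_of_lt (hk1 s) one_lt_top)
    have hreal : (φ s * k s + c').toReal = (φ s + k s * c').toReal := by rw [hs]
    rw [ENNReal.toReal_add (ENNReal.mul_ne_top ofReal_ne_top hkt) hc't,
      ENNReal.toReal_add ofReal_ne_top (ENNReal.mul_ne_top hkt hc't),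
      ENNReal.toReal_mul, ENNReal.toReal_mul] at hreal
    have hφr : (φ s).toReal = f s := ENNReal.toReal_ofReal (hf0 s)
    have hcr : c'.toReal = c := ENNReal.toReal_ofReal hc
    rw [hφr, hcr] at hreal
    have hk1' : (k s).toReal = 1 := by
      have hne : f s - c ≠ 0 := by linarith
      have : ((k s).toReal - 1) * (f s - c) = 0 := by linarith
      rcases mul_eq_zero.mp this with h | h
      · linarith
      · exact absurd h hne
    have : k s = 1 := by
      rw [← ENNReal.toReal_one] at hk1'
      exact (ENNReal.toReal_eq_toReal_iff' hkt one_ne_top).mp hk1'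
    exact this
end

section
/- Let 𝒮 be a compact metric space and P a Markov transition kernel on 𝒮 with the strong Feller property. If there exists exactly one minimal closed invariant set in 𝒮, then the invariant probability measure for P is unique: any two invariant probability measures coincide. -/
/-! The support of a nonzero invariant measure is a closed invariant set: by the strong Feller
property `s ↦ P(s, A)` is continuous, so it vanishes on the support as soon as it vanishes
almost everywhere. By Zorn's lemma and compactness every closed invariant set contains a minimal
one, so the supports of all nonzero invariant measures contain the unique minimal set `C`.
If `μ₁ ≠ μ₂`, the two parts `μ₁ - μ₂` and `μ₂ - μ₁` of the Jordan decomposition are nonzero,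
invariant and mutually singular; a point `x ∈ C` lies in both supports, so `P(x, ·)` would
charge neither a separating set nor its complement. -/

open MeasureTheory ENNReal

/-- A closed set `C` is invariant for the kernel `P` if `P(s, C) = 1` for every `s ∈ C`. -/
def ClosedInvariantSet {S : Type*} [TopologicalSpace S] [MeasurableSpace S]
    (P : S → Measure S) (C : Set S) : Prop :=
  C.Nonempty ∧ IsClosed C ∧ ∀ s ∈ C, P s C = 1

/-- A nonempty closed invariant set is minimal if it contains no proper nonempty closed
invariant subset. -/
def MinimalClosedInvariantSet {S : Type*} [TopologicalSpace S] [MeasurableSpace S]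
    (P : S → Measure S) (C : Set S) : Prop :=
  ClosedInvariantSet P C ∧ ∀ D : Set S, ClosedInvariantSet P D → D ⊆ C → D = C

open ProbabilityTheory

section MinimalSets

variable {α : Type*} [TopologicalSpace α] [MeasurableSpace α]

lemma sInter_mem_ae_of_isClosed [HereditarilyLindelofSpace α] {μ : Measure α}
    {c : Set (Set α)} (hc : ∀ D ∈ c, IsClosed D) (hae : ∀ D ∈ c, D ∈ ae μ) : ⋂₀ c ∈ ae μ := by
  rw [← compl_compl (⋂₀ c)]
  refine (HereditarilyLindelofSpace.isLindelof _).compl_mem_sets_of_nhdsWithin fun x hx => ?_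
  obtain ⟨D, hD, hxD⟩ : ∃ D ∈ c, x ∉ D := by simpa using hx
  exact ⟨Dᶜ, mem_nhdsWithin_of_mem_nhds ((hc D hD).isOpen_compl.mem_nhds hxD),
    by simpa using hae D hD⟩

variable [CompactSpace α] [HereditarilyLindelofSpace α] [OpensMeasurableSpace α]
  {P : α → Measure α} [∀ a, IsProbabilityMeasure (P a)]

lemma ClosedInvariantSet.sInter {c : Set (Set α)} (hc : ∀ D ∈ c, ClosedInvariantSet P D)
    (hchain : IsChain (· ⊆ ·) c) (hne : c.Nonempty) : ClosedInvariantSet P (⋂₀ c) := by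
  have hclosed : ∀ D ∈ c, IsClosed D := fun D hD => (hc D hD).2.1
  refine ⟨?_, isClosed_sInter hclosed, fun a ha => ?_⟩
  · have : Nonempty c := hne.to_subtype
    refine IsCompact.nonempty_sInter_of_directed_nonempty_isCompact_isClosed
      (fun D hD D' hD' => ?_) (fun D hD => (hc D hD).1)
      (fun D hD => (hclosed D hD).isCompact) hclosed
    rcases hchain.total hD hD' with h | h
    exacts [⟨D, hD, subset_rfl, h⟩, ⟨D', hD', h, subset_rfl⟩]
  · rw [← mem_ae_iff_prob_eq_one (isClosed_sInter hclosed).measurableSet]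
    refine sInter_mem_ae_of_isClosed hclosed fun D hD => ?_
    rw [mem_ae_iff_prob_eq_one (hclosed D hD).measurableSet]
    exact (hc D hD).2.2 a (Set.mem_sInter.1 ha D hD)

lemma exists_minimalClosedInvariantSet_subset {C : Set α} (hC : ClosedInvariantSet P C) :
    ∃ D ⊆ C, MinimalClosedInvariantSet P D := by
  obtain ⟨D, hDC, hD⟩ := zorn_superset_nonempty {D | ClosedInvariantSet P D}
    (fun c hc hchain hne => ⟨⋂₀ c, ClosedInvariantSet.sInter hc hchain hne,
      fun D hD => Set.sInter_subset_of_mem hD⟩) C hC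
  exact ⟨D, hDC, hD.1, fun D' hD' hD'D => hD'D.antisymm (hD.2 hD' hD'D)⟩

end MinimalSets

namespace MeasureTheory.Measure

variable {α β : Type*} [MeasurableSpace α] [MeasurableSpace β]

lemma bind_mono {μ ν : Measure α} (κ : Kernel α β) (h : μ ≤ ν) : μ.bind κ ≤ ν.bind κ :=
  Measure.le_iff.2 fun A hA => by
    rw [bind_apply hA κ.aemeasurable, bind_apply hA κ.aemeasurable]
    exact lintegral_mono' h le_rfl

lemma eq_of_sub_eq_zero {μ ν : Measure α} [IsProbabilityMeasure μ] [IsProbabilityMeasure ν]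
    (h : μ - ν = 0) : μ = ν :=
  eq_of_le_of_isProbabilityMeasure (by simpa using sub_le_iff_le_add.1 h.le)

end MeasureTheory.Measure

namespace ProbabilityTheory.Kernel

variable {α : Type*} [MeasurableSpace α] {κ : Kernel α α} {μ ν : Measure α}

lemma invariant_iff :
    κ.Invariant μ ↔ ∀ A, MeasurableSet A → μ A = ∫⁻ a, κ a A ∂μ := by
  refine ⟨fun h A hA => ?_, fun h => Measure.ext fun A hA => ?_⟩
  · rw [← Measure.bind_apply hA κ.aemeasurable, h]
  · rw [Measure.bind_apply hA κ.aemeasurable, h A hA]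

/-- `μ - ν` is subinvariant by its minimality among the `d` with `μ ≤ d + ν`, and a Markov
kernel preserves total mass. -/
lemma Invariant.sub [IsMarkovKernel κ] [IsFiniteMeasure μ] [IsFiniteMeasure ν]
    (hμ : κ.Invariant μ) (hν : κ.Invariant ν) : κ.Invariant (μ - ν) := by
  have hle : μ - ν ≤ (μ - ν).bind κ := by
    refine Measure.sub_le_of_le_add ?_
    calc μ = μ.bind κ := hμ.symm
      _ ≤ (μ - ν + ν).bind κ := Measure.bind_mono κ (Measure.sub_le_iff_le_add.1 le_rfl)
      _ = (μ - ν).bind κ + ν := by rw [Measure.comp_add, hν]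
  exact (Measure.eq_of_le_of_measure_univ_eq hle Measure.comp_apply_univ.symm).symm

variable [TopologicalSpace α]

def IsStrongFeller {β : Type*} [MeasurableSpace β] (κ : Kernel α β) : Prop :=
  ∀ f : β → ℝ, Measurable f → (∃ M, ∀ x, |f x| ≤ M) → Continuous fun a => ∫ x, f x ∂(κ a)

lemma IsStrongFeller.continuous_measureReal_apply {β : Type*} [MeasurableSpace β]
    {η : Kernel α β} [IsFiniteKernel η] (hη : η.IsStrongFeller) {A : Set β}
    (hA : MeasurableSet A) : Continuous fun a => (η a).real A := by
  have hbound : ∀ x, |A.indicator (1 : β → ℝ) x| ≤ 1 := fun x => by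
    by_cases hx : x ∈ A <;> simp [hx]
  simpa only [integral_indicator_one hA] using
    hη _ (measurable_one.indicator hA) ⟨1, hbound⟩

/-- By invariance `κ · A` vanishes `μ`-a.e., and by the strong Feller property it is
continuous, so it vanishes on the support. -/
lemma IsStrongFeller.apply_eq_zero_of_mem_support [IsFiniteKernel κ] (hκ : κ.IsStrongFeller)
    (hμ : κ.Invariant μ) {A : Set α} (hA : MeasurableSet A) (hμA : μ A = 0) {x : α}
    (hx : x ∈ μ.support) : κ x A = 0 := by
  set U := {a | 0 < (κ a).real A}
  have hU : IsOpen U := isOpen_lt continuous_const (hκ.continuous_measureReal_apply hA)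
  have hae : ∀ᵐ a ∂μ, κ a A = 0 := by
    rwa [invariant_iff.1 hμ A hA, lintegral_eq_zero_iff (κ.measurable_coe hA)] at hμA
  have hμU : μ U = 0 := measure_mono_null
    (fun a (ha : 0 < (κ a).real A) => (ENNReal.toReal_pos_iff.1 ha).1.ne') (ae_iff.1 hae)
  have hxU : x ∉ U := fun hxU => Measure.subset_compl_support_of_isOpen hU hμU hxU hx
  simpa [U, Measure.real, ENNReal.toReal_pos_iff, measure_lt_top] using hxU

lemma IsStrongFeller.disjoint_support [IsMarkovKernel κ] (hκ : κ.IsStrongFeller)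
    (hμ : κ.Invariant μ) (hν : κ.Invariant ν) (hμν : μ ⟂ₘ ν) :
    Disjoint μ.support ν.support := by
  obtain ⟨s, hs, hμs, hνs⟩ := hμν
  refine Set.disjoint_left.2 fun x hxμ hxν => ?_
  have h : κ x (s ∪ sᶜ) = 0 := measure_union_null
    (hκ.apply_eq_zero_of_mem_support hμ hs hμs hxμ)
    (hκ.apply_eq_zero_of_mem_support hν hs.compl hνs hxν)
  simp at h

variable [HereditarilyLindelofSpace α] [OpensMeasurableSpace α]

lemma IsStrongFeller.closedInvariantSet_support [IsMarkovKernel κ] (hκ : κ.IsStrongFeller)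
    (hμ : κ.Invariant μ) (hμ0 : μ ≠ 0) : ClosedInvariantSet κ μ.support :=
  ⟨Measure.nonempty_support hμ0, Measure.isClosed_support, fun _ hx =>
    (prob_compl_eq_zero_iff Measure.isClosed_support.measurableSet).1 <|
      hκ.apply_eq_zero_of_mem_support hμ Measure.isClosed_support.isOpen_compl.measurableSet
        Measure.measure_compl_support hx⟩

end ProbabilityTheory.Kernel

open ProbabilityTheory.Kernel in
/-- on a compact metric space, for a strong Feller Markov kernel `P`, if
there is exactly one minimal closed invariant set, then the invariant probability measure
is unique: any two invariant probability measures coincide. -/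
theorem stmt_11
    {S : Type*} [MetricSpace S] [CompactSpace S] [MeasurableSpace S] [BorelSpace S]
    (P : S → Measure S) (hP : Measurable P) [∀ s, IsProbabilityMeasure (P s)]
    (hSF : ∀ f : S → ℝ, Measurable f → (∃ M, ∀ x, |f x| ≤ M) →
      Continuous fun s => ∫ x, f x ∂(P s))
    (hmin : ∃! C : Set S, MinimalClosedInvariantSet P C)
    (μ₁ μ₂ : Measure S) [IsProbabilityMeasure μ₁] [IsProbabilityMeasure μ₂]
    (hμ₁ : ∀ A : Set S, MeasurableSet A → μ₁ A = ∫⁻ s, P s A ∂μ₁)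
    (hμ₂ : ∀ A : Set S, MeasurableSet A → μ₂ A = ∫⁻ s, P s A ∂μ₂) :
    μ₁ = μ₂ := by
  let κ : Kernel S S := ⟨P, hP⟩
  have : IsMarkovKernel κ := ⟨fun s => inferInstanceAs (IsProbabilityMeasure (P s))⟩
  have hκ : κ.IsStrongFeller := hSF
  have h₁ : κ.Invariant μ₁ := invariant_iff.2 hμ₁
  have h₂ : κ.Invariant μ₂ := invariant_iff.2 hμ₂
  obtain ⟨C, hC, hC_unique⟩ := hmin
  have hC_support {ν : Measure S} (hν : κ.Invariant ν) (hν0 : ν ≠ 0) : C ⊆ ν.support := by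
    obtain ⟨D, hD_sub, hD⟩ :=
      exists_minimalClosedInvariantSet_subset (hκ.closedInvariantSet_support hν hν0)
    exact hC_unique D hD ▸ hD_sub
  by_contra hne
  have h₁₂ := h₁.sub h₂
  have h₂₁ := h₂.sub h₁
  obtain ⟨x, hx⟩ := hC.1.1
  refine (hκ.disjoint_support h₁₂ h₂₁ Measure.mutually_singular_measure_sub).ne_of_mem
    (hC_support h₁₂ ?_ hx) (hC_support h₂₁ ?_ hx) rfl
  exacts [mt Measure.eq_of_sub_eq_zero hne, mt Measure.eq_of_sub_eq_zero (Ne.symm hne)]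
end

section
/- Let 𝒮 be a metric space and P a Markov transition kernel on 𝒮 with the strong Feller property. Let μ₁ and μ₂ be invariant probability measures that are mutually singular, i.e., there exists a Borel set A with μ₁(A) = 1 and μ₂(A) = 0. Then their topological supports are disjoint: supp(μ₁) ∩ supp(μ₂) = ∅. -/
open MeasureTheory ENNReal

/-!
Strong Feller makes `s ↦ P(s, A)` continuous. Invariance forces it to equal `1` almost
everywhere for `μ₁` (as `μ₁(Aᶜ) = 0`) and `0` almost everywhere for `μ₂`, and a continuous
function that is almost everywhere constant takes that constant on the whole support.
A common point of the two supports would then have `P(s, A)` equal to both `1` and `0`.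
-/

/-- The topological support of a measure: the set of points all of whose open
neighbourhoods have positive measure (equivalently, the smallest closed set of full
measure). -/
def measureSupport {S : Type*} [TopologicalSpace S] [MeasurableSpace S]
    (μ : Measure S) : Set S :=
  {x | ∀ U : Set S, IsOpen U → x ∈ U → 0 < μ U}

theorem Continuous.eqOn_measureSupport_of_ae_eq_const {S Y : Type*} [TopologicalSpace S]
    [MeasurableSpace S] [TopologicalSpace Y] [T1Space Y] {μ : Measure S} {g : S → Y}
    (hg : Continuous g) {c : Y} (hae : ∀ᵐ s ∂μ, g s = c) :
    Set.EqOn g (fun _ => c) (measureSupport μ) := by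
  intro x hx
  by_contra hne
  have hnull : μ (g ⁻¹' {c}ᶜ) = 0 := ae_iff.mp hae
  exact (hx _ (isOpen_compl_singleton.preimage hg) hne).ne' hnull

section MarkovKernel

variable {S : Type*} [MeasurableSpace S]

def IsStrongFeller [TopologicalSpace S] (P : S → Measure S) : Prop :=
  ∀ f : S → ℝ, Measurable f → (∃ M, ∀ x, |f x| ≤ M) → Continuous fun s => ∫ x, f x ∂(P s)

def IsInvariantMeasure (P : S → Measure S) (μ : Measure S) : Prop :=
  ∀ A : Set S, MeasurableSet A → μ A = ∫⁻ s, P s A ∂μ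

theorem IsStrongFeller.continuous_measureReal [TopologicalSpace S] {P : S → Measure S}
    (hSF : IsStrongFeller P) {A : Set S} (hA : MeasurableSet A) :
    Continuous fun s => (P s).real A := by
  have hbdd : ∃ M, ∀ x, |A.indicator (1 : S → ℝ) x| ≤ M :=
    ⟨1, fun x => by by_cases hx : x ∈ A <;> simp [hx]⟩
  simpa only [integral_indicator_one hA] using
    hSF (A.indicator 1) (measurable_one.indicator hA) hbdd

theorem IsInvariantMeasure.ae_apply_eq_zero {P : S → Measure S} {μ : Measure S}
    (hμ : IsInvariantMeasure P μ) (hP : Measurable P) {N : Set S} (hN : MeasurableSet N)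
    (hμN : μ N = 0) : ∀ᵐ s ∂μ, P s N = 0 :=
  (lintegral_eq_zero_iff ((Measure.measurable_coe hN).comp hP)).mp ((hμ N hN).symm.trans hμN)

end MarkovKernel

theorem stmt_13_general
    {S : Type*} [MetricSpace S] [MeasurableSpace S]
    (P : S → Measure S) (hP : Measurable P) [∀ s, IsProbabilityMeasure (P s)]
    (hSF : ∀ f : S → ℝ, Measurable f → (∃ M, ∀ x, |f x| ≤ M) →
      Continuous fun s => ∫ x, f x ∂(P s))
    (μ₁ μ₂ : Measure S) [IsProbabilityMeasure μ₁]
    (hμ₁ : ∀ A : Set S, MeasurableSet A → μ₁ A = ∫⁻ s, P s A ∂μ₁)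
    (hμ₂ : ∀ A : Set S, MeasurableSet A → μ₂ A = ∫⁻ s, P s A ∂μ₂)
    (A : Set S) (hA : MeasurableSet A) (hA₁ : μ₁ A = 1) (hA₂ : μ₂ A = 0) :
    measureSupport μ₁ ∩ measureSupport μ₂ = ∅ := by
  have hcont : Continuous fun s => (P s).real A :=
    IsStrongFeller.continuous_measureReal hSF hA
  have h₁ : ∀ᵐ s ∂μ₁, (P s).real A = 1 := by
    filter_upwards [IsInvariantMeasure.ae_apply_eq_zero hμ₁ hP hA.compl
      ((prob_compl_eq_zero_iff hA).mpr hA₁)] with s hs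
    simp [measureReal_def, (prob_compl_eq_zero_iff hA).mp hs]
  have h₂ : ∀ᵐ s ∂μ₂, (P s).real A = 0 := by
    filter_upwards [IsInvariantMeasure.ae_apply_eq_zero hμ₂ hP hA hA₂] with s hs
    simp [measureReal_def, hs]
  refine Set.eq_empty_of_forall_notMem fun x ⟨hx₁, hx₂⟩ => (one_ne_zero : (1 : ℝ) ≠ 0) ?_
  calc (1 : ℝ) = (P x).real A := (hcont.eqOn_measureSupport_of_ae_eq_const h₁ hx₁).symm
    _ = 0 := hcont.eqOn_measureSupport_of_ae_eq_const h₂ hx₂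

/-- for a strong Feller Markov kernel `P` on a metric space, if `μ₁` and
`μ₂` are invariant probability measures that are mutually singular (there is a Borel set
`A` with `μ₁(A) = 1` and `μ₂(A) = 0`), then their topological supports are disjoint. -/
theorem stmt_13
    {S : Type*} [MetricSpace S] [MeasurableSpace S] [BorelSpace S]
    (P : S → Measure S) (hP : Measurable P) [∀ s, IsProbabilityMeasure (P s)]
    (hSF : ∀ f : S → ℝ, Measurable f → (∃ M, ∀ x, |f x| ≤ M) →
      Continuous fun s => ∫ x, f x ∂(P s))
    (μ₁ μ₂ : Measure S) [IsProbabilityMeasure μ₁] [IsProbabilityMeasure μ₂]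
    (hμ₁ : ∀ A : Set S, MeasurableSet A → μ₁ A = ∫⁻ s, P s A ∂μ₁)
    (hμ₂ : ∀ A : Set S, MeasurableSet A → μ₂ A = ∫⁻ s, P s A ∂μ₂)
    (A : Set S) (hA : MeasurableSet A) (hA₁ : μ₁ A = 1) (hA₂ : μ₂ A = 0) :
    measureSupport μ₁ ∩ measureSupport μ₂ = ∅ :=
  stmt_13_general P hP hSF μ₁ μ₂ hμ₁ hμ₂ A hA hA₁ hA₂
end

section
/- Let P be a Markov transition kernel on a measurable space 𝒮, and suppose there exist a probability measure η on 𝒮, an integer m ≥ 1, and a constant α ∈ (0, 1] such that for all s ∈ 𝒮 and all Borel sets B, P^m(s, B) ≥ α · η(B) (Doeblin's minorization condition). Then the invariant probability measure for P is unique: any two invariant probability measures coincide. -/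
/-!
Fix a measurable `A` and put `f k s = P^{km}(s, A)`. Minorization writes every `P^m(s, ·)` as
a residual measure of mass `1 - α` plus the common part `α • η`, so integrating against
`P^m(s, ·)` contracts the oscillation `sup f - inf f` by the factor `1 - α`; hence
`osc (f k) ≤ (1 - α)^k`. An invariant `μ` satisfies `μ A = ∫ f k dμ ∈ [inf f k, sup f k]`,
so two invariant probability measures differ on `A` by at most `(1 - α)^k → 0`.
-/

open MeasureTheory ENNReal

/-- The `n`-step kernel of a Markov transition kernel `P`: `kernelIter P 0 s = δ_s` and
`kernelIter P (n+1) s B = ∫ kernelIter P n s' B dP(s, ds')`, so that `kernelIter P 1 = P`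
and `kernelIter P (n+1)(s, B) = ∫ (kernelIter P n)(s', B) P(s, ds')`. -/
noncomputable def kernelIter {S : Type*} [MeasurableSpace S]
    (P : S → Measure S) : ℕ → S → Measure S
  | 0 => fun s => Measure.dirac s
  | n + 1 => fun s => (P s).bind (kernelIter P n)

section Oscillation

variable {S : Type*} [MeasurableSpace S]

noncomputable def osc {ι : Type*} (f : ι → ℝ≥0∞) : ℝ≥0∞ := (⨆ i, f i) - ⨅ i, f i

lemma iInf_le_lintegral (μ : Measure S) [IsProbabilityMeasure μ] (f : S → ℝ≥0∞) :
    ⨅ x, f x ≤ ∫⁻ x, f x ∂μ :=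
  calc ⨅ x, f x = ∫⁻ _, ⨅ x, f x ∂μ := by simp
    _ ≤ ∫⁻ x, f x ∂μ := lintegral_mono fun x => iInf_le f x

lemma lintegral_le_iSup (μ : Measure S) [IsProbabilityMeasure μ] (f : S → ℝ≥0∞) :
    ∫⁻ x, f x ∂μ ≤ ⨆ x, f x :=
  calc ∫⁻ x, f x ∂μ ≤ ∫⁻ _, ⨆ x, f x ∂μ := lintegral_mono fun x => le_iSup f x
    _ = ⨆ x, f x := by simp

lemma lintegral_le_lintegral_add_osc (μ ν : Measure S) [IsProbabilityMeasure μ]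
    [IsProbabilityMeasure ν] (f : S → ℝ≥0∞) :
    ∫⁻ x, f x ∂μ ≤ ∫⁻ x, f x ∂ν + osc f :=
  calc ∫⁻ x, f x ∂μ ≤ ⨆ x, f x := lintegral_le_iSup μ f
    _ ≤ osc f + ⨅ x, f x := le_tsub_add
    _ ≤ ∫⁻ x, f x ∂ν + osc f := by rw [add_comm]; gcongr; exact iInf_le_lintegral ν f

lemma exists_add_smul_eq_of_smul_le {ν η : Measure S} [IsProbabilityMeasure ν]
    [IsProbabilityMeasure η] {α : ℝ≥0∞} (h : α • η ≤ ν) :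
    ∃ ρ : Measure S, ρ + α • η = ν ∧ ρ Set.univ = 1 - α := by
  have : IsFiniteMeasure (α • η) := isFiniteMeasure_of_le ν h
  refine ⟨ν - α • η, Measure.sub_add_cancel_of_le h, ?_⟩
  rw [Measure.sub_apply MeasurableSet.univ h]
  simp

/-- All the `κ i` share the mass `α • η`, so only the remaining mass `1 - α` sees the
oscillation of `f`. -/
lemma osc_lintegral_le_of_smul_le {ι : Type*} (κ : ι → Measure S)
    [∀ i, IsProbabilityMeasure (κ i)] (η : Measure S) [IsProbabilityMeasure η] {α : ℝ≥0∞}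
    (h : ∀ i, α • η ≤ κ i) (f : S → ℝ≥0∞) :
    osc (fun i => ∫⁻ x, f x ∂κ i) ≤ (1 - α) * osc f := by
  set c := α * ∫⁻ x, f x ∂η
  have bounds : ∀ i, (1 - α) * (⨅ x, f x) + c ≤ ∫⁻ x, f x ∂κ i ∧
      ∫⁻ x, f x ∂κ i ≤ (1 - α) * (⨆ x, f x) + c := by
    intro i
    obtain ⟨ρ, hρ, hρ_univ⟩ := exists_add_smul_eq_of_smul_le (h i)
    have hρ_const : ∀ y : ℝ≥0∞, ∫⁻ _, y ∂ρ = (1 - α) * y := fun y => by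
      rw [lintegral_const, hρ_univ, mul_comm]
    rw [← hρ, lintegral_add_measure, lintegral_smul_measure, smul_eq_mul, ← hρ_const, ← hρ_const]
    exact ⟨by gcongr with x; exact iInf_le f x, by gcongr with x; exact le_iSup f x⟩
  rw [osc, tsub_le_iff_right]
  calc ⨆ i, ∫⁻ x, f x ∂κ i ≤ (1 - α) * (⨆ x, f x) + c := iSup_le fun i => (bounds i).2
    _ ≤ (1 - α) * (osc f + ⨅ x, f x) + c := by gcongr; exact le_tsub_add
    _ = (1 - α) * osc f + ((1 - α) * (⨅ x, f x) + c) := by ring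
    _ ≤ (1 - α) * osc f + ⨅ i, ∫⁻ x, f x ∂κ i := by gcongr; exact le_iInf fun i => (bounds i).1

end Oscillation

lemma ENNReal.le_of_forall_le_add_pow {a b r : ℝ≥0∞} (hr : r < 1) (h : ∀ k : ℕ, a ≤ b + r ^ k) :
    a ≤ b := by
  have hlim : Filter.Tendsto (fun k : ℕ => b + r ^ k) Filter.atTop (nhds (b + 0)) :=
    (ENNReal.tendsto_pow_atTop_nhds_zero_of_lt_one hr).const_add b
  simpa using ge_of_tendsto' hlim h

section kernelIter

variable {S : Type*} [MeasurableSpace S] {P : S → Measure S}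

lemma measurable_kernelIter (hP : Measurable P) : ∀ n, Measurable (kernelIter P n)
  | 0 => Measure.measurable_dirac
  | n + 1 => (Measure.measurable_bind' (measurable_kernelIter hP n)).comp hP

lemma isProbabilityMeasure_kernelIter (hP : Measurable P) [∀ s, IsProbabilityMeasure (P s)] :
    ∀ n s, IsProbabilityMeasure (kernelIter P n s)
  | 0, s => by rw [kernelIter]; infer_instance
  | n + 1, s => by
    have := isProbabilityMeasure_kernelIter hP n
    constructor
    rw [kernelIter, Measure.bind_apply .univ (measurable_kernelIter hP n).aemeasurable]
    simp

lemma kernelIter_add (hP : Measurable P) (a : ℕ) :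
    ∀ b s, kernelIter P (a + b) s = (kernelIter P b s).bind (kernelIter P a)
  | 0, s => (Measure.dirac_bind (measurable_kernelIter hP a) s).symm
  | b + 1, s => by
    rw [← add_assoc, kernelIter, kernelIter, funext (kernelIter_add hP a b),
      Measure.bind_bind (measurable_kernelIter hP b).aemeasurable
        (measurable_kernelIter hP a).aemeasurable]

lemma bind_kernelIter_of_bind_eq (hP : Measurable P) {μ : Measure S} (hμ : μ.bind P = μ) :
    ∀ n, μ.bind (kernelIter P n) = μ
  | 0 => Measure.bind_dirac
  | n + 1 => by
    rw [kernelIter, ← Measure.bind_bind hP.aemeasurable (measurable_kernelIter hP n).aemeasurable,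
      hμ, bind_kernelIter_of_bind_eq hP hμ n]

lemma bind_eq_self_of_forall_apply (hP : Measurable P) {μ : Measure S}
    (hμ : ∀ A : Set S, MeasurableSet A → μ A = ∫⁻ s, P s A ∂μ) : μ.bind P = μ := by
  ext A hA
  rw [Measure.bind_apply hA hP.aemeasurable, ← hμ A hA]

lemma kernelIter_succ_mul_apply (hP : Measurable P) (k m : ℕ) (s : S) {A : Set S}
    (hA : MeasurableSet A) :
    kernelIter P ((k + 1) * m) s A = ∫⁻ t, kernelIter P (k * m) t A ∂kernelIter P m s := by
  rw [add_one_mul, kernelIter_add hP,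
    Measure.bind_apply hA (measurable_kernelIter hP _).aemeasurable]

lemma osc_kernelIter_mul_apply_le (hP : Measurable P) [∀ s, IsProbabilityMeasure (P s)]
    (η : Measure S) [IsProbabilityMeasure η] {m : ℕ} {α : ℝ≥0∞}
    (hDoeblin : ∀ s, α • η ≤ kernelIter P m s) {A : Set S} (hA : MeasurableSet A) (k : ℕ) :
    osc (fun s => kernelIter P (k * m) s A) ≤ (1 - α) ^ k := by
  have := isProbabilityMeasure_kernelIter hP
  induction k with
  | zero => rw [pow_zero]; exact tsub_le_self.trans (iSup_le fun s => prob_le_one)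
  | succ k ih =>
    simp_rw [kernelIter_succ_mul_apply hP k m _ hA, pow_succ']
    exact (osc_lintegral_le_of_smul_le _ η hDoeblin _).trans (by gcongr)

lemma le_of_bind_eq_self_of_smul_le_kernelIter (hP : Measurable P)
    [∀ s, IsProbabilityMeasure (P s)] (η : Measure S) [IsProbabilityMeasure η] {m : ℕ}
    {α : ℝ≥0∞} (hα0 : 0 < α) (hDoeblin : ∀ s, α • η ≤ kernelIter P m s)
    (μ ν : Measure S) [IsProbabilityMeasure μ] [IsProbabilityMeasure ν]
    (hμ : μ.bind P = μ) (hν : ν.bind P = ν) : μ ≤ ν := by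
  have hr : 1 - α < 1 := ENNReal.sub_lt_self one_ne_top one_ne_zero hα0.ne'
  refine Measure.le_iff.2 fun A hA => ENNReal.le_of_forall_le_add_pow hr fun k => ?_
  have := isProbabilityMeasure_kernelIter hP (k * m)
  rw [← bind_kernelIter_of_bind_eq hP hμ (k * m), ← bind_kernelIter_of_bind_eq hP hν (k * m),
    Measure.bind_apply hA (measurable_kernelIter hP _).aemeasurable,
    Measure.bind_apply hA (measurable_kernelIter hP _).aemeasurable]
  calc _ ≤ _ := lintegral_le_lintegral_add_osc μ ν _
    _ ≤ _ := by gcongr; exact osc_kernelIter_mul_apply_le hP η hDoeblin hA k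

end kernelIter

theorem stmt_15_general
    {S : Type*} [MeasurableSpace S]
    (P : S → Measure S) (hP : Measurable P) [∀ s, IsProbabilityMeasure (P s)]
    (η : Measure S) [IsProbabilityMeasure η]
    (m : ℕ)
    (α : ℝ≥0∞) (hα0 : 0 < α)
    (hDoeblin : ∀ s : S, ∀ B : Set S, MeasurableSet B → α * η B ≤ kernelIter P m s B)
    (μ₁ μ₂ : Measure S) [IsProbabilityMeasure μ₁] [IsProbabilityMeasure μ₂]
    (hμ₁ : ∀ A : Set S, MeasurableSet A → μ₁ A = ∫⁻ s, P s A ∂μ₁)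
    (hμ₂ : ∀ A : Set S, MeasurableSet A → μ₂ A = ∫⁻ s, P s A ∂μ₂) :
    μ₁ = μ₂ := by
  have hminor : ∀ s, α • η ≤ kernelIter P m s := fun s =>
    Measure.le_iff.2 fun B hB => by simpa using hDoeblin s B hB
  have hμ₁' := bind_eq_self_of_forall_apply hP hμ₁
  have hμ₂' := bind_eq_self_of_forall_apply hP hμ₂
  exact le_antisymm (le_of_bind_eq_self_of_smul_le_kernelIter hP η hα0 hminor μ₁ μ₂ hμ₁' hμ₂')
    (le_of_bind_eq_self_of_smul_le_kernelIter hP η hα0 hminor μ₂ μ₁ hμ₂' hμ₁')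

/-- Doeblin's criterion: if there exist a probability measure `η`, an
integer `m ≥ 1` and a constant `α ∈ (0, 1]` such that `P^m(s, B) ≥ α η(B)` for all `s`
and all Borel `B`, then any two invariant probability measures of `P` coincide. -/
theorem stmt_15
    {S : Type*} [MeasurableSpace S]
    (P : S → Measure S) (hP : Measurable P) [∀ s, IsProbabilityMeasure (P s)]
    (η : Measure S) [IsProbabilityMeasure η]
    (m : ℕ) (hm : 1 ≤ m)
    (α : ℝ≥0∞) (hα0 : 0 < α) (hα1 : α ≤ 1)
    (hDoeblin : ∀ s : S, ∀ B : Set S, MeasurableSet B → α * η B ≤ kernelIter P m s B)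
    (μ₁ μ₂ : Measure S) [IsProbabilityMeasure μ₁] [IsProbabilityMeasure μ₂]
    (hμ₁ : ∀ A : Set S, MeasurableSet A → μ₁ A = ∫⁻ s, P s A ∂μ₁)
    (hμ₂ : ∀ A : Set S, MeasurableSet A → μ₂ A = ∫⁻ s, P s A ∂μ₂) :
    μ₁ = μ₂ :=
  stmt_15_general P hP η m α hα0 hDoeblin μ₁ μ₂ hμ₁ hμ₂
end

section
/- Let 𝒮 and 𝒜 be measurable spaces, 𝒯 a Markov transition kernel from 𝒮 × 𝒜 to 𝒮, π a measurable policy, c : 𝒮 × 𝒜 → ℝ a bounded measurable cost, and μ_π an invariant probability measure for the induced kernel P^π. Let V be a bounded measurable solution of the Poisson equation V − P^π V = C_π, and set Q(s,a) = c(s,a) + ∫_𝒮 V(s') 𝒯(s, a, ds'). Let s ↦ δπ(s) be a measurable family of finite signed measures on 𝒜 with δπ(s)(𝒜) = 0 and uniformly bounded total variation, define δC(s) = ∫_𝒜 c(s,a) d δπ(s)(a) and the signed kernel δP(s, B) = ∫_𝒜 𝒯(s, a, B) d δπ(s)(a), and let ν be a finite signed measure satisfying ν = ν P^π + μ_π δP,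 where (μ_π δP)(B) = ∫_𝒮 δP(s, B) dμ_π(s). Then ∫_𝒮 δC dμ_π + ∫_𝒮 C_π dν = ∫_𝒮 (∫_𝒜 Q(s,a) d δπ(s)(a)) dμ_π(s). -/
/-!
Write `P^π s = (π ⊗ₖ 𝒯).snd s` and `δP s = (δπ ⊗ₖ 𝒯).snd s`. Integrating the Poisson
equation against `ν` and using `ν = ν P^π + μ_π δP` gives
`∫ C_π dν = ∫ V dν - ∫ V d(ν P^π) = ∫ V d(μ_π δP)`. On the other side, Fubini for the
composite kernel turns `∫ (∫ Q dδπ(s)) dμ_π(s)` into `∫ δC dμ_π + ∫ V d(μ_π δP)`.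
Boundedness of `c` and `V` together with finiteness of all measures makes every integral
finite, so the signed measures can be handled through their positive and negative parts.
-/

open MeasureTheory ENNReal NNReal ProbabilityTheory

section

variable {α β γ E : Type*} [MeasurableSpace α] [MeasurableSpace β] [MeasurableSpace γ]

lemma ProbabilityTheory.Kernel.snd_compProd_apply_eq_bind (κ : Kernel α β) [IsSFiniteKernel κ]
    (η : Kernel (α × β) γ) [IsSFiniteKernel η] (a : α) :
    (κ ⊗ₖ η).snd a = η.sectR a ∘ₘ κ a := by
  ext s hs
  rw [Kernel.snd_apply' _ _ hs, Kernel.compProd_apply (measurable_snd hs),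
    Measure.bind_apply hs (Kernel.aemeasurable _)]
  rfl

lemma MeasureTheory.Measure.integral_comp [NormedAddCommGroup E] [NormedSpace ℝ E]
    {μ : Measure α} {κ : Kernel α β} {f : β → E} (hf : Integrable f (κ ∘ₘ μ)) :
    ∫ y, f y ∂(κ ∘ₘ μ) = ∫ x, ∫ y, f y ∂κ x ∂μ := by
  rw [Measure.comp_eq_comp_const_apply] at hf ⊢
  rw [Kernel.integral_comp hf, Kernel.const_apply]

lemma integrable_of_abs_le {μ : Measure α} [IsFiniteMeasure μ] {f : α → ℝ}
    (hf : Measurable f) {M : ℝ} (hM : ∀ x, |f x| ≤ M) : Integrable f μ :=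
  .of_bound hf.aestronglyMeasurable M (ae_of_all _ hM)

lemma ProbabilityTheory.Kernel.integrable_integral_of_abs_le (κ : Kernel α β) [IsFiniteKernel κ]
    (μ : Measure α) [IsFiniteMeasure μ] {f : α → β → ℝ} (hf : Measurable (Function.uncurry f))
    {M : ℝ} (hM : ∀ a b, |f a b| ≤ M) : Integrable (fun a => ∫ b, f a b ∂κ a) μ := by
  refine .of_bound hf.stronglyMeasurable.integral_kernel_prod_right.aestronglyMeasurable
    (|M| * κ.bound.toReal) (ae_of_all _ fun a => ?_)
  calc ‖∫ b, f a b ∂κ a‖ ≤ M * (κ a).real Set.univ :=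
        norm_integral_le_of_norm_le_const (ae_of_all _ (hM a))
    _ ≤ |M| * (κ a).real Set.univ := by gcongr; exact le_abs_self M
    _ ≤ |M| * κ.bound.toReal := by
        gcongr
        exact ENNReal.toReal_mono κ.bound_ne_top (κ.measure_le_bound a Set.univ)

lemma integral_eq_integral_sub_integral_comp_of_poisson (P : Kernel α α) [IsFiniteKernel P]
    {V C : α → ℝ} (hV : Measurable V) {M : ℝ} (hM : ∀ x, |V x| ≤ M)
    (hPoisson : ∀ x, V x - ∫ y, V y ∂P x = C x) (m : Measure α) [IsFiniteMeasure m] :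
    ∫ x, C x ∂m = ∫ x, V x ∂m - ∫ x, V x ∂(P ∘ₘ m) := by
  simp_rw [← hPoisson]
  rw [integral_sub (integrable_of_abs_le hV hM)
      (P.integrable_integral_of_abs_le m (f := fun _ y => V y) (hV.comp measurable_snd)
        fun _ => hM),
    Measure.integral_comp (integrable_of_abs_le hV hM)]

lemma integral_sub_integral_eq_of_poisson (P : Kernel α α) [IsFiniteKernel P]
    {V C : α → ℝ} (hV : Measurable V) {M : ℝ} (hM : ∀ x, |V x| ≤ M)
    (hPoisson : ∀ x, V x - ∫ y, V y ∂P x = C x)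
    {νp νm ρp ρm : Measure α} [IsFiniteMeasure νp] [IsFiniteMeasure νm]
    [IsFiniteMeasure ρp] [IsFiniteMeasure ρm]
    (hν : νp + P ∘ₘ νm + ρm = νm + P ∘ₘ νp + ρp) :
    ∫ x, C x ∂νp - ∫ x, C x ∂νm = ∫ x, V x ∂ρp - ∫ x, V x ∂ρm := by
  have hint (m : Measure α) [IsFiniteMeasure m] : Integrable V m := integrable_of_abs_le hV hM
  have hVν := congrArg (fun m => ∫ x, V x ∂m) hν
  simp only [integral_add_measure (hint _) (hint _)] at hVν
  rw [integral_eq_integral_sub_integral_comp_of_poisson P hV hM hPoisson,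
    integral_eq_integral_sub_integral_comp_of_poisson P hV hM hPoisson]
  linarith

lemma integral_eq_integral_add_integral_snd_compProd (κ : Kernel α β) [IsFiniteKernel κ]
    (η : Kernel (α × β) α) [IsFiniteKernel η] {c Q : α → β → ℝ}
    (hc : Measurable (Function.uncurry c)) {Mc : ℝ} (hMc : ∀ s a, |c s a| ≤ Mc)
    {V : α → ℝ} (hV : Measurable V) {Mv : ℝ} (hMv : ∀ x, |V x| ≤ Mv)
    (hQ : ∀ s a, Q s a = c s a + ∫ x, V x ∂η (s, a)) (s : α) :
    ∫ a, Q s a ∂κ s = ∫ a, c s a ∂κ s + ∫ x, V x ∂(κ ⊗ₖ η).snd s := by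
  have hc_int : Integrable (fun a => c s a) (κ s) :=
    integrable_of_abs_le (hc.comp measurable_prodMk_left) (hMc s)
  have hηV_int : Integrable (fun a => ∫ x, V x ∂η (s, a)) (κ s) :=
    (η.sectR s).integrable_integral_of_abs_le (κ s) (f := fun _ x => V x)
      (hV.comp measurable_snd) fun _ => hMv
  simp_rw [hQ, κ.snd_compProd_apply_eq_bind η s]
  rw [integral_add hc_int hηV_int, Measure.integral_comp (integrable_of_abs_le hV hMv)]
  rfl

lemma integral_sub_integral_eq_add_integral_comp_sub (κp κm : Kernel α β)
    [IsFiniteKernel κp] [IsFiniteKernel κm]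
    (η : Kernel (α × β) α) [IsFiniteKernel η] {c Q : α → β → ℝ}
    (hc : Measurable (Function.uncurry c)) {Mc : ℝ} (hMc : ∀ s a, |c s a| ≤ Mc)
    {V : α → ℝ} (hV : Measurable V) {Mv : ℝ} (hMv : ∀ x, |V x| ≤ Mv)
    (hQ : ∀ s a, Q s a = c s a + ∫ x, V x ∂η (s, a)) (μ : Measure α) [IsFiniteMeasure μ] :
    ∫ s, (∫ a, Q s a ∂κp s - ∫ a, Q s a ∂κm s) ∂μ
      = ∫ s, (∫ a, c s a ∂κp s - ∫ a, c s a ∂κm s) ∂μ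
        + (∫ x, V x ∂((κp ⊗ₖ η).snd ∘ₘ μ) - ∫ x, V x ∂((κm ⊗ₖ η).snd ∘ₘ μ)) := by
  have hc_int (κ : Kernel α β) [IsFiniteKernel κ] : Integrable (fun s => ∫ a, c s a ∂κ s) μ :=
    κ.integrable_integral_of_abs_le μ hc hMc
  have hV_int (D : Kernel α α) [IsFiniteKernel D] : Integrable (fun s => ∫ x, V x ∂D s) μ :=
    D.integrable_integral_of_abs_le μ (f := fun _ x => V x) (hV.comp measurable_snd) fun _ => hMv
  simp_rw [integral_eq_integral_add_integral_snd_compProd _ η hc hMc hV hMv hQ,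
    add_sub_add_comm]
  rw [integral_add ?_ ?_, integral_sub (hV_int _) (hV_int _),
    Measure.integral_comp (integrable_of_abs_le hV hMv),
    Measure.integral_comp (integrable_of_abs_le hV hMv)]
  · exact (hc_int κp).sub (hc_int κm)
  · exact (hV_int _).sub (hV_int _)

end

theorem stmt_18_general
    {S : Type*} [MeasurableSpace S] {A : Type*} [MeasurableSpace A]
    (T : S → A → Measure S) (hT : Measurable (fun p : S × A => T p.1 p.2))
    [∀ s a, IsProbabilityMeasure (T s a)]
    (π : S → Measure A) (hπ : Measurable π) [∀ s, IsProbabilityMeasure (π s)]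
    (c : S → A → ℝ) (hc : Measurable (fun p : S × A => c p.1 p.2))
    (hcb : ∃ M, ∀ s a, |c s a| ≤ M)
    (μπ : Measure S) [IsProbabilityMeasure μπ]
    (V : S → ℝ) (hV : Measurable V) (hVb : ∃ M, ∀ s, |V s| ≤ M)
    (hPoisson : ∀ s, V s - ∫ x, V x ∂((π s).bind (T s)) = ∫ a, c s a ∂(π s))
    (Q : S → A → ℝ) (hQ : ∀ s a, Q s a = c s a + ∫ x, V x ∂(T s a))
    (δp δm : S → Measure A) (hδp : Measurable δp) (hδm : Measurable δm)
    (Cb : ℝ≥0) (hδpb : ∀ s, δp s Set.univ ≤ Cb) (hδmb : ∀ s, δm s Set.univ ≤ Cb)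
    (νp νm : Measure S) [IsFiniteMeasure νp] [IsFiniteMeasure νm]
    (hν : ∀ B : Set S, MeasurableSet B →
      νp B + (∫⁻ s, ((π s).bind (T s)) B ∂νm) + (∫⁻ s, ((δm s).bind (T s)) B ∂μπ)
        = νm B + (∫⁻ s, ((π s).bind (T s)) B ∂νp) + (∫⁻ s, ((δp s).bind (T s)) B ∂μπ)) :
    (∫ s, ((∫ a, c s a ∂(δp s)) - (∫ a, c s a ∂(δm s))) ∂μπ)
      + ((∫ s, (∫ a, c s a ∂(π s)) ∂νp) - (∫ s, (∫ a, c s a ∂(π s)) ∂νm))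
      = ∫ s, ((∫ a, Q s a ∂(δp s)) - (∫ a, Q s a ∂(δm s))) ∂μπ := by
  obtain ⟨Mc, hMc⟩ := hcb
  obtain ⟨Mv, hMv⟩ := hVb
  obtain ⟨Kπ, rfl⟩ : ∃ K : Kernel S A, ⇑K = π := ⟨⟨π, hπ⟩, rfl⟩
  obtain ⟨Kp, rfl⟩ : ∃ K : Kernel S A, ⇑K = δp := ⟨⟨δp, hδp⟩, rfl⟩
  obtain ⟨Km, rfl⟩ : ∃ K : Kernel S A, ⇑K = δm := ⟨⟨δm, hδm⟩, rfl⟩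
  let η : Kernel (S × A) S := ⟨fun p => T p.1 p.2, hT⟩
  have : IsMarkovKernel η := ⟨fun p => inferInstanceAs (IsProbabilityMeasure (T p.1 p.2))⟩
  have : IsMarkovKernel Kπ := ⟨inferInstance⟩
  have : IsFiniteKernel Kp := ⟨⟨Cb, ENNReal.coe_lt_top, hδpb⟩⟩
  have : IsFiniteKernel Km := ⟨⟨Cb, ENNReal.coe_lt_top, hδmb⟩⟩
  have hbind (κ : Kernel S A) [IsSFiniteKernel κ] (s : S) : (κ ⊗ₖ η).snd s = (κ s).bind (T s) :=
    κ.snd_compProd_apply_eq_bind η s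
  have hcomp (κ : Kernel S A) [IsSFiniteKernel κ] (m : Measure S) {B : Set S}
      (hB : MeasurableSet B) :
      ∫⁻ s, (κ s).bind (T s) B ∂m = ((κ ⊗ₖ η).snd ∘ₘ m) B := by
    simp_rw [← hbind]
    exact (Measure.bind_apply hB (Kernel.aemeasurable _)).symm
  have hmeas : νp + (Kπ ⊗ₖ η).snd ∘ₘ νm + (Km ⊗ₖ η).snd ∘ₘ μπ
      = νm + (Kπ ⊗ₖ η).snd ∘ₘ νp + (Kp ⊗ₖ η).snd ∘ₘ μπ := by
    ext B hB
    simpa only [Measure.add_apply, hcomp _ _ hB] using hν B hB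
  simp_rw [← hbind] at hPoisson
  rw [integral_sub_integral_eq_add_integral_comp_sub Kp Km η hc hMc hV hMv hQ μπ,
    integral_sub_integral_eq_of_poisson _ hV hMv hPoisson hmeas]

/-- total variation of the objective in terms of the Q-function:
with `P^π(s,·) = (π s).bind (T s)`, `C_π(s) = ∫ c(s,a) dπ(s)(a)`, an invariant
probability measure `μ_π` for `P^π`, a bounded measurable `V` solving the Poisson
equation `V − P^π V = C_π`, and `Q(s,a) = c(s,a) + ∫ V(s') 𝒯(s,a,ds')`; given a
measurable family of finite signed measures `δπ(s) = δp(s) − δm(s)` on `𝒜` with total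
mass zero and uniformly bounded total variation, the induced variation of the cost
`δC(s) = ∫ c(s,a) dδπ(s)(a)`, the signed kernel `δP(s,B) = ∫ 𝒯(s,a,B) dδπ(s)(a)`, and a
finite signed measure `ν = νp − νm` satisfying `ν = ν P^π + μ_π δP`, we have
`∫ δC dμ_π + ∫ C_π dν = ∫ (∫ Q(s,a) dδπ(s)(a)) dμ_π(s)`. -/
theorem stmt_18
    {S : Type*} [MeasurableSpace S] {A : Type*} [MeasurableSpace A]
    (T : S → A → Measure S) (hT : Measurable (fun p : S × A => T p.1 p.2))
    [∀ s a, IsProbabilityMeasure (T s a)]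
    (π : S → Measure A) (hπ : Measurable π) [∀ s, IsProbabilityMeasure (π s)]
    (c : S → A → ℝ) (hc : Measurable (fun p : S × A => c p.1 p.2))
    (hcb : ∃ M, ∀ s a, |c s a| ≤ M)
    (μπ : Measure S) [IsProbabilityMeasure μπ]
    (hμπ : ∀ B : Set S, MeasurableSet B → μπ B = ∫⁻ s, ((π s).bind (T s)) B ∂μπ)
    (V : S → ℝ) (hV : Measurable V) (hVb : ∃ M, ∀ s, |V s| ≤ M)
    (hPoisson : ∀ s, V s - ∫ x, V x ∂((π s).bind (T s)) = ∫ a, c s a ∂(π s))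
    (Q : S → A → ℝ) (hQ : ∀ s a, Q s a = c s a + ∫ x, V x ∂(T s a))
    (δp δm : S → Measure A) (hδp : Measurable δp) (hδm : Measurable δm)
    (Cb : ℝ≥0) (hδpb : ∀ s, δp s Set.univ ≤ Cb) (hδmb : ∀ s, δm s Set.univ ≤ Cb)
    (hzero : ∀ s, δp s Set.univ = δm s Set.univ)
    (νp νm : Measure S) [IsFiniteMeasure νp] [IsFiniteMeasure νm]
    (hν : ∀ B : Set S, MeasurableSet B →
      νp B + (∫⁻ s, ((π s).bind (T s)) B ∂νm) + (∫⁻ s, ((δm s).bind (T s)) B ∂μπ)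
        = νm B + (∫⁻ s, ((π s).bind (T s)) B ∂νp) + (∫⁻ s, ((δp s).bind (T s)) B ∂μπ)) :
    (∫ s, ((∫ a, c s a ∂(δp s)) - (∫ a, c s a ∂(δm s))) ∂μπ)
      + ((∫ s, (∫ a, c s a ∂(π s)) ∂νp) - (∫ s, (∫ a, c s a ∂(π s)) ∂νm))
      = ∫ s, ((∫ a, Q s a ∂(δp s)) - (∫ a, Q s a ∂(δm s))) ∂μπ :=
  stmt_18_general T hT π hπ c hc hcb μπ V hV hVb hPoisson Q hQ δp δm hδp hδm Cb hδpb hδmb νp νm hν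
end
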